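/- arXiv:2410.06080 — 9 statements merged into one kernel-verified Lean document; each statement's English description precedes it below -/
import Mathlib

section
/- Let I' be a class of instances of the strategic knapsack problem that is closed under inclusion, and let M be a deterministic mechanism that is not strategyproof on I'. Then there exist an instance in I' with item set E, an agent a, and an item i ∈ E_a such that v_a(M(E)) < v_a(M(E∖{i})). -/
open Finset

/-- If a deterministic mechanism is not strategyproof on a class of instances
(item sets) closed under inclusion, then some agent benefits from hiding a single item. -/
theorem stmt_0 {ι A : Type*} [DecidableEq ι] [DecidableEq A]
    (v s : ι → ℝ) (owner : ι → A) (C : ℝ)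
    (hC : 0 < C) (hv : ∀ i, 0 < v i) (hs : ∀ i, 0 < s i) (hsC : ∀ i, s i ≤ C)
    (hvinj : Function.Injective v) (hsinj : Function.Injective s)
    (I : Set (Finset ι))
    (hclosed : ∀ E ∈ I, ∀ E' ⊆ E, E' ∈ I)
    (M : Finset ι → Finset ι)
    (hfeas : ∀ E : Finset ι, M E ⊆ E ∧ ∑ i ∈ M E, s i ≤ C)
    (hnotSP : ¬ ∀ E ∈ I, ∀ a : A, ∀ E' ⊆ E,
        E \ E' ⊆ E.filter (fun i => owner i = a) →
        ∑ i ∈ (M E').filter (fun i => owner i = a), v i ≤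
          ∑ i ∈ (M E).filter (fun i => owner i = a), v i) :
    ∃ E ∈ I, ∃ a : A, ∃ i ∈ E.filter (fun j => owner j = a),
      ∑ j ∈ (M E).filter (fun j => owner j = a), v j <
        ∑ j ∈ (M (E.erase i)).filter (fun j => owner j = a), v j := by
  push_neg at hnotSP
  obtain ⟨E, hE, a, E', hsub, hown, hlt⟩ := hnotSP
  -- induct on the size of E \ E'
  have key : ∀ n : ℕ, ∀ E ∈ I, ∀ E' ⊆ E,
      (E \ E').card ≤ n →
      E \ E' ⊆ E.filter (fun i => owner i = a) →
      ∑ i ∈ (M E).filter (fun i => owner i = a), v i <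
        ∑ i ∈ (M E').filter (fun i => owner i = a), v i →
      ∃ E ∈ I, ∃ a : A, ∃ i ∈ E.filter (fun j => owner j = a),
        ∑ j ∈ (M E).filter (fun j => owner j = a), v j <
          ∑ j ∈ (M (E.erase i)).filter (fun j => owner j = a), v j := by
    intro n
    induction n with
    | zero =>
      intro E hE E' hsub hcard _ hlt
      have : E \ E' = ∅ := card_eq_zero.mp (Nat.le_zero.mp hcard)
      have hEE' : E' = E := Subset.antisymm hsub (fun x hx => by
        by_contra hx'
        exact absurd (mem_sdiff.mpr ⟨hx, hx'⟩) (by simp [this]))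
      rw [hEE'] at hlt
      exact absurd hlt (lt_irrefl _)
    | succ n ih =>
      intro E hE E' hsub hcard hownE hlt
      by_cases hne : E \ E' = ∅
      · have hEE' : E' = E := Subset.antisymm hsub (fun x hx => by
          by_contra hx'
          exact absurd (mem_sdiff.mpr ⟨hx, hx'⟩) (by simp [hne]))
        rw [hEE'] at hlt
        exact absurd hlt (lt_irrefl _)
      · obtain ⟨i, hi⟩ := nonempty_iff_ne_empty.mpr hne
        have hiE : i ∈ E := (mem_sdiff.mp hi).1
        have hiE' : i ∉ E' := (mem_sdiff.mp hi).2
        by_cases hcase :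
            ∑ j ∈ (M E).filter (fun j => owner j = a), v j <
              ∑ j ∈ (M (E.erase i)).filter (fun j => owner j = a), v j
        · exact ⟨E, hE, a, i, hownE hi, hcase⟩
        · push_neg at hcase
          apply ih (E.erase i) (hclosed E hE _ (erase_subset i E))
            E' (fun x hx => mem_erase.mpr ⟨fun h => hiE' (h ▸ hx), hsub hx⟩)
          · have h1 : E.erase i \ E' ⊆ (E \ E').erase i := by
              intro x hx
              rcases mem_sdiff.mp hx with ⟨hx1, hx2⟩
              rcases mem_erase.mp hx1 with ⟨hxi, hxE⟩
              exact mem_erase.mpr ⟨hxi, mem_sdiff.mpr ⟨hxE, hx2⟩⟩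
            calc (E.erase i \ E').card ≤ ((E \ E').erase i).card := card_le_card h1
              _ = (E \ E').card - 1 := card_erase_of_mem hi
              _ ≤ (n + 1) - 1 := Nat.sub_le_sub_right hcard 1
              _ = n := rfl
          · intro x hx
            rcases mem_sdiff.mp hx with ⟨hx1, hx2⟩
            have := hownE (mem_sdiff.mpr ⟨(mem_erase.mp hx1).2, hx2⟩)
            rw [mem_filter] at this ⊢
            exact ⟨hx1, this.2⟩
          · exact lt_of_le_of_lt hcase hlt
  exact key (E \ E').card E hE E' hsub le_rfl hown hlt
end

section
/- Let E and E' be sets of items (over a common universe with fixed values, sizes, and capacity C), let i ∈ E ∩ E', and let k and k' be such that i is the k-th item in the greedy order of E and the k'-th item in the greedy order of E'. If Σ_{p=1}^{k−1} s_{i_p(E)} ≥ Σ_{p=1}^{k'−1} s_{i_p(E')}, then x_i(E) ≤ x_i(E'). -/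
open Finset

/-- The items strictly preceding `i` in the greedy order of `E`:
larger density, ties broken in favor of larger value. -/
noncomputable def gbefore {ι : Type*} (v s : ι → ℝ) (E : Finset ι) (i : ι) : Finset ι :=
  E.filter (fun j => v i / s i < v j / s j ∨ (v j / s j = v i / s i ∧ v i < v j))

/-- The fractional greedy solution: items are packed in the greedy order
(decreasing density, ties broken in favor of larger value) until the capacity is reached. -/
noncomputable def fgx {ι : Type*} (v s : ι → ℝ) (C : ℝ) (E : Finset ι) (i : ι) : ℝ :=
  min 1 (max 0 ((C - ∑ j ∈ gbefore v s E i, s j) / s i))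

/-- if the total size of the items preceding `i` in the greedy order of `E`
is at least the total size of the items preceding `i` in the greedy order of `E'`,
then `x_i(E) ≤ x_i(E')`. -/
theorem stmt_2 {ι : Type*} [DecidableEq ι]
    (v s : ι → ℝ) (C : ℝ)
    (hC : 0 < C) (hv : ∀ i, 0 < v i) (hs : ∀ i, 0 < s i) (hsC : ∀ i, s i ≤ C)
    (hvinj : Function.Injective v) (hsinj : Function.Injective s)
    (E E' : Finset ι) (i : ι) (hiE : i ∈ E) (hiE' : i ∈ E')
    (hsum : ∑ j ∈ gbefore v s E' i, s j ≤ ∑ j ∈ gbefore v s E i, s j) :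
    fgx v s C E i ≤ fgx v s C E' i := by
  unfold fgx
  have hsi := hs i
  exact min_le_min le_rfl (max_le_max le_rfl
    (div_le_div_of_nonneg_right (by linarith) hsi.le))
end

section
/- For every set of items E, every agent a, and every item i ∈ E_a such that E∖{i} is nonempty, the fractional greedy solution satisfies: (i) for every agent b ≠ a, (Σ_{j∈E_b} v_j x_j(E)) / (Σ_{j∈E} v_j x_j(E)) ≤ (Σ_{j∈E_b} v_j x_j(E∖{i})) / (Σ_{j∈E∖{i}} v_j x_j(E∖{i})); and (ii) (Σ_{j∈E_a} v_j x_j(E)) / (Σ_{j∈E} v_j x_j(E)) ≥ (Σ_{j∈E_a∖{i}} v_j x_j(E∖{i})) / (Σ_{j∈E∖{i}} v_j x_j(E∖{i})). -/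
open Finset

section aux

variable {ι : Type*} [DecidableEq ι]

/-- `j` strictly precedes `k` in the greedy order. -/
def gprec (v s : ι → ℝ) (j k : ι) : Prop :=
  v k / s k < v j / s j ∨ (v j / s j = v k / s k ∧ v k < v j)

/-- The key whose (reverse) lexicographic order matches the greedy order. -/
noncomputable def gkey (v s : ι → ℝ) (j : ι) : ℝ ×ₗ ℝ := toLex (v j / s j, v j)

omit [DecidableEq ι] in
lemma gprec_iff (v s : ι → ℝ) {j k : ι} : gprec v s j k ↔ gkey v s k < gkey v s j := by
  rw [gkey, gkey, Prod.Lex.lt_iff]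
  constructor
  · rintro (h | ⟨h1, h2⟩)
    · exact Or.inl h
    · exact Or.inr ⟨h1.symm, h2⟩
  · rintro (h | ⟨h1, h2⟩)
    · exact Or.inl h
    · exact Or.inr ⟨h1.symm, h2⟩

lemma mem_gbefore (v s : ι → ℝ) {E : Finset ι} {j k : ι} :
    j ∈ gbefore v s E k ↔ j ∈ E ∧ gprec v s j k := by
  simp [gbefore, gprec, Finset.mem_filter]

omit [DecidableEq ι] in
lemma gkey_injective {v : ι → ℝ} (s : ι → ℝ) (hvinj : Function.Injective v) :
    Function.Injective (gkey v s) := by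
  intro j k h
  apply hvinj
  have := congrArg (fun p => (ofLex p).2) h
  simpa [gkey] using this

omit [DecidableEq ι] in
lemma gprec_trans {v : ι → ℝ} (s : ι → ℝ) {j k l : ι}
    (h1 : gprec v s j k) (h2 : gprec v s k l) : gprec v s j l := by
  rw [gprec_iff] at *
  exact h2.trans h1

omit [DecidableEq ι] in
lemma gprec_trichotomy {v : ι → ℝ} (s : ι → ℝ) (hvinj : Function.Injective v)
    {j k : ι} (hjk : j ≠ k) : gprec v s j k ∨ gprec v s k j := by
  rcases lt_trichotomy (gkey v s j) (gkey v s k) with h | h | h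
  · exact Or.inr ((gprec_iff v s).2 h)
  · exact absurd (gkey_injective s hvinj h) hjk
  · exact Or.inl ((gprec_iff v s).2 h)

lemma gbefore_erase (v s : ι → ℝ) (E : Finset ι) (i k : ι) :
    gbefore v s (E.erase i) k = (gbefore v s E k).erase i := by
  simp [gbefore, Finset.filter_erase]

omit [DecidableEq ι] in
lemma fgx_nonneg (v s : ι → ℝ) (C : ℝ) (E : Finset ι) (k : ι) : 0 ≤ fgx v s C E k :=
  le_min zero_le_one (le_max_left _ _)

omit [DecidableEq ι] in
lemma fgx_le_one (v s : ι → ℝ) (C : ℝ) (E : Finset ι) (k : ι) : fgx v s C E k ≤ 1 :=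
  min_le_left _ _

lemma fgx_erase_le (v s : ι → ℝ) (hs : ∀ i, 0 < s i) (C : ℝ) {E : Finset ι} {i k : ι}
    (hk : k ∈ E.erase i) : fgx v s C E k ≤ fgx v s C (E.erase i) k := by
  have hsum : ∑ j ∈ gbefore v s (E.erase i) k, s j ≤ ∑ j ∈ gbefore v s E k, s j := by
    rw [gbefore_erase]
    exact Finset.sum_le_sum_of_subset_of_nonneg (Finset.erase_subset _ _)
      (fun j _ _ => (hs j).le)
  unfold fgx
  have h := div_le_div_of_nonneg_right (by linarith : C - ∑ j ∈ gbefore v s E k, s j ≤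
    C - ∑ j ∈ gbefore v s (E.erase i) k, s j) (hs k).le
  exact min_le_min le_rfl (max_le_max le_rfl h)

omit [DecidableEq ι] in
/-- Per-item size consumption identity. -/
lemma s_mul_fgx (v s : ι → ℝ) (hs : ∀ i, 0 < s i) (C : ℝ) (E : Finset ι) (k : ι) :
    s k * fgx v s C E k =
      min C ((∑ j ∈ gbefore v s E k, s j) + s k) - min C (∑ j ∈ gbefore v s E k, s j) := by
  set B := ∑ j ∈ gbefore v s E k, s j with hB
  have hsk := hs k
  rcases le_or_gt C B with h | h
  · have h1 : (C - B) / s k ≤ 0 := div_nonpos_iff.2 (Or.inr ⟨by linarith, hsk.le⟩)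
    rw [min_eq_left h, min_eq_left (by linarith)]
    simp [fgx, ← hB, max_eq_left h1]
  · rcases le_or_gt (B + s k) C with h2 | h2
    · have h1 : (1 : ℝ) ≤ (C - B) / s k := (le_div_iff₀ hsk).2 (by linarith)
      rw [min_eq_right h2, min_eq_right h.le]
      have hmx : max 0 ((C - B) / s k) = (C - B) / s k := max_eq_right (by linarith)
      simp only [fgx, ← hB, hmx, min_eq_left h1]
      ring
    · have h1 : (0 : ℝ) ≤ (C - B) / s k := div_nonneg (by linarith) hsk.le
      have h3 : (C - B) / s k ≤ 1 := (div_le_one hsk).2 (by linarith)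
      rw [min_eq_left h2.le, min_eq_right h.le]
      simp only [fgx, ← hB, max_eq_right h1, min_eq_right h3]
      field_simp

/-- Total size consumed by the fractional greedy solution. -/
lemma sum_s_fgx (v s : ι → ℝ) (hvinj : Function.Injective v) (hs : ∀ i, 0 < s i)
    {C : ℝ} (hC : 0 < C) (E : Finset ι) :
    ∑ j ∈ E, s j * fgx v s C E j = min C (∑ j ∈ E, s j) := by
  induction E using Finset.strongInduction with
  | _ E ih =>
    rcases E.eq_empty_or_nonempty with rfl | hne
    · simp [min_eq_right hC.le]
    · obtain ⟨m, hmE, hmin⟩ := Finset.exists_min_image E (gkey v s) hne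
      have hprec : ∀ j ∈ E, j ≠ m → gprec v s j m := by
        intro j hj hjm
        refine (gprec_iff v s).2 (lt_of_le_of_ne (hmin j hj) ?_)
        intro h
        exact hjm (gkey_injective s hvinj h).symm
      have hgm : gbefore v s E m = E.erase m := by
        ext j
        rw [mem_gbefore, Finset.mem_erase]
        constructor
        · rintro ⟨hj, hp⟩
          refine ⟨?_, hj⟩
          rintro rfl
          exact lt_irrefl _ ((gprec_iff v s).1 hp)
        · rintro ⟨hjm, hj⟩
          exact ⟨hj, hprec j hj hjm⟩
      have hgb : ∀ j ∈ E.erase m, gbefore v s E j = gbefore v s (E.erase m) j := by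
        intro j hj
        rw [gbefore_erase]
        symm
        apply Finset.erase_eq_of_notMem
        rw [mem_gbefore]
        rintro ⟨-, hp⟩
        exact absurd (hmin j (Finset.mem_of_mem_erase hj)) (not_le.2 ((gprec_iff v s).1 hp))
      have hfgx : ∀ j ∈ E.erase m, fgx v s C E j = fgx v s C (E.erase m) j := by
        intro j hj
        unfold fgx
        rw [hgb j hj]
      rw [← Finset.sum_erase_add E _ hmE,
        Finset.sum_congr rfl (fun j hj => by rw [hfgx j hj]),
        ih (E.erase m) (Finset.erase_ssubset hmE),
        s_mul_fgx v s hs, hgm, ← Finset.sum_erase_add E s hmE]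
      ring

/-- Optimality of the fractional greedy solution among all feasible fractional solutions. -/
lemma fgx_opt (v s : ι → ℝ) (hvinj : Function.Injective v) (hs : ∀ i, 0 < s i)
    (hv : ∀ i, 0 < v i) {C : ℝ} (hC : 0 < C) (E : Finset ι) (z : ι → ℝ)
    (hz0 : ∀ j, 0 ≤ z j) (hz1 : ∀ j, z j ≤ 1)
    (hzC : ∑ j ∈ E, s j * z j ≤ C) :
    ∑ j ∈ E, v j * z j ≤ ∑ j ∈ E, v j * fgx v s C E j := by
  rcases le_or_gt (∑ j ∈ E, s j) C with hcase | hcase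
  · -- everything fits: fgx = 1 on E
    refine Finset.sum_le_sum (fun j hj => ?_)
    have hB : (∑ k ∈ gbefore v s E j, s k) + s j ≤ ∑ k ∈ E, s k := by
      have hsub : insert j (gbefore v s E j) ⊆ E := by
        intro k hk
        rcases Finset.mem_insert.1 hk with rfl | hk
        · exact hj
        · exact ((mem_gbefore v s).1 hk).1
      have hnm : j ∉ gbefore v s E j := by
        rw [mem_gbefore]
        rintro ⟨-, hp⟩
        exact lt_irrefl _ ((gprec_iff v s).1 hp)
      calc (∑ k ∈ gbefore v s E j, s k) + s j
          = ∑ k ∈ insert j (gbefore v s E j), s k := by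
            rw [Finset.sum_insert hnm]; ring
        _ ≤ ∑ k ∈ E, s k :=
            Finset.sum_le_sum_of_subset_of_nonneg hsub (fun k _ _ => (hs k).le)
    have h1 : (1 : ℝ) ≤ (C - ∑ k ∈ gbefore v s E j, s k) / s j :=
      (le_div_iff₀ (hs j)).2 (by linarith)
    have hx1 : fgx v s C E j = 1 := by
      unfold fgx
      rw [max_eq_right (by linarith), min_eq_left h1]
    rw [hx1, mul_one]
    exact mul_le_of_le_one_right (hv j).le (hz1 j)
  · -- capacity binds
    have hsumC : ∑ j ∈ E, s j * fgx v s C E j = C := by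
      rw [sum_s_fgx v s hvinj hs hC E, min_eq_left hcase.le]
    set F := E.filter (fun j => fgx v s C E j < 1) with hF
    have hFne : F.Nonempty := by
      by_contra h
      rw [Finset.not_nonempty_iff_eq_empty] at h
      have hall : ∀ j ∈ E, fgx v s C E j = 1 := by
        intro j hj
        by_contra h1
        have : j ∈ F := Finset.mem_filter.2 ⟨hj, lt_of_le_of_ne (fgx_le_one v s C E j) h1⟩
        simp [h] at this
      have : ∑ j ∈ E, s j * fgx v s C E j = ∑ j ∈ E, s j :=
        Finset.sum_congr rfl (fun j hj => by rw [hall j hj, mul_one])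
      rw [hsumC] at this
      linarith
    obtain ⟨c, hcF, hcmax⟩ := Finset.exists_max_image F (gkey v s) hFne
    have hcE : c ∈ E := (Finset.mem_filter.1 hcF).1
    have hclt : fgx v s C E c < 1 := (Finset.mem_filter.1 hcF).2
    -- items before c are fully packed
    have hbefore : ∀ j ∈ E, gprec v s j c → fgx v s C E j = 1 := by
      intro j hj hp
      by_contra h1
      have hjF : j ∈ F := Finset.mem_filter.2 ⟨hj, lt_of_le_of_ne (fgx_le_one v s C E j) h1⟩
      exact absurd (hcmax j hjF) (not_le.2 ((gprec_iff v s).1 hp))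
    -- items after c get nothing
    have hBc : C - ∑ k ∈ gbefore v s E c, s k < s c := by
      by_contra h1
      push_neg at h1
      have h2 : (1 : ℝ) ≤ (C - ∑ k ∈ gbefore v s E c, s k) / s c :=
        (le_div_iff₀ (hs c)).2 (by linarith)
      have : fgx v s C E c = 1 := by
        unfold fgx
        rw [max_eq_right (by linarith), min_eq_left h2]
      linarith
    have hafter : ∀ j ∈ E, gprec v s c j → fgx v s C E j = 0 := by
      intro j hj hp
      have hsub : insert c (gbefore v s E c) ⊆ gbefore v s E j := by
        intro k hk
        rcases Finset.mem_insert.1 hk with rfl | hk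
        · exact (mem_gbefore v s).2 ⟨hcE, hp⟩
        · obtain ⟨hkE, hkp⟩ := (mem_gbefore v s).1 hk
          exact (mem_gbefore v s).2 ⟨hkE, gprec_trans s hkp hp⟩
      have hnm : c ∉ gbefore v s E c := by
        rw [mem_gbefore]
        rintro ⟨-, hq⟩
        exact lt_irrefl _ ((gprec_iff v s).1 hq)
      have hsums : s c + ∑ k ∈ gbefore v s E c, s k ≤ ∑ k ∈ gbefore v s E j, s k := by
        rw [← Finset.sum_insert hnm]
        exact Finset.sum_le_sum_of_subset_of_nonneg hsub (fun k _ _ => (hs k).le)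
      have h1 : (C - ∑ k ∈ gbefore v s E j, s k) / s j ≤ 0 :=
        div_nonpos_iff.2 (Or.inr ⟨by linarith, (hs j).le⟩)
      unfold fgx
      rw [max_eq_left h1]
      simp
    -- density comparisons
    set dc := v c / s c with hdc
    have hdcpos : 0 < dc := div_pos (hv c) (hs c)
    have key : ∀ j ∈ E, dc * (s j * (fgx v s C E j - z j)) ≤ v j * fgx v s C E j - v j * z j := by
      intro j hj
      have hvd : (v j / s j) * (s j * (fgx v s C E j - z j)) =
          v j * fgx v s C E j - v j * z j := by
        have hsj := (hs j).ne'
        field_simp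
      rw [← hvd]
      rcases eq_or_ne j c with rfl | hjc
      · rw [← hdc]
      rcases gprec_trichotomy s hvinj hjc with hp | hp
      · -- j before c : fgx j = 1, density ≥ dc
        have hx1 : fgx v s C E j = 1 := hbefore j hj hp
        have hd : dc ≤ v j / s j := by
          rcases hp with h | ⟨h, -⟩
          · exact h.le
          · exact h.ge
        have hnn : 0 ≤ s j * (fgx v s C E j - z j) := by
          have := hz1 j
          rw [hx1]
          exact mul_nonneg (hs j).le (by linarith)
        exact mul_le_mul_of_nonneg_right hd hnn
      · -- c before j : fgx j = 0, density ≤ dc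
        have hx0 : fgx v s C E j = 0 := hafter j hj hp
        have hd : v j / s j ≤ dc := by
          rcases hp with h | ⟨h, -⟩
          · exact h.le
          · exact h.ge
        have hnp : s j * (fgx v s C E j - z j) ≤ 0 := by
          have := hz0 j
          rw [hx0]
          exact mul_nonpos_of_nonneg_of_nonpos (hs j).le (by linarith)
        exact mul_le_mul_of_nonpos_right hd hnp
    have hsumkey : ∑ j ∈ E, dc * (s j * (fgx v s C E j - z j)) ≤
        ∑ j ∈ E, (v j * fgx v s C E j - v j * z j) := Finset.sum_le_sum key
    have hlhs : ∑ j ∈ E, dc * (s j * (fgx v s C E j - z j)) =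
        dc * ((∑ j ∈ E, s j * fgx v s C E j) - ∑ j ∈ E, s j * z j) := by
      rw [← Finset.sum_sub_distrib, ← Finset.mul_sum]
      congr 1
      exact Finset.sum_congr rfl (fun j _ => by ring)
    have hpos : 0 ≤ dc * ((∑ j ∈ E, s j * fgx v s C E j) - ∑ j ∈ E, s j * z j) := by
      apply mul_nonneg hdcpos.le
      rw [hsumC]
      linarith
    rw [Finset.sum_sub_distrib] at hsumkey
    rw [hlhs] at hsumkey
    linarith

lemma sum_v_fgx_pos (v s : ι → ℝ) (hs : ∀ i, 0 < s i) (hv : ∀ i, 0 < v i)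
    {C : ℝ} (hC : 0 < C) {E : Finset ι} (hne : E.Nonempty) :
    0 < ∑ j ∈ E, v j * fgx v s C E j := by
  obtain ⟨m, hmE, hmax⟩ := Finset.exists_max_image E (gkey v s) hne
  have hgm : gbefore v s E m = ∅ := by
    rw [Finset.eq_empty_iff_forall_notMem]
    intro j hj
    obtain ⟨hjE, hp⟩ := (mem_gbefore v s).1 hj
    exact absurd (hmax j hjE) (not_le.2 ((gprec_iff v s).1 hp))
  have hfm : 0 < fgx v s C E m := by
    unfold fgx
    rw [hgm]
    simp only [Finset.sum_empty, sub_zero]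
    exact lt_min one_pos (lt_max_of_lt_right (div_pos hC (hs m)))
  refine Finset.sum_pos' (fun j _ => mul_nonneg (hv j).le (fgx_nonneg v s C E j)) ⟨m, hmE, ?_⟩
  exact mul_pos (hv m) hfm

end aux

/-- when an agent `a` hides an item `i`, the fraction of the value of the
fractional greedy solution owned by any other agent `b` cannot decrease, and the fraction
owned by `a` cannot increase. -/
theorem stmt_5 {ι A : Type*} [DecidableEq ι] [DecidableEq A]
    (v s : ι → ℝ) (owner : ι → A) (C : ℝ)
    (hC : 0 < C) (hv : ∀ i, 0 < v i) (hs : ∀ i, 0 < s i) (hsC : ∀ i, s i ≤ C)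
    (hvinj : Function.Injective v) (hsinj : Function.Injective s)
    (E : Finset ι) (a : A) (i : ι) (hiE : i ∈ E) (hia : owner i = a)
    (hne : (E.erase i).Nonempty) :
    (∀ b : A, b ≠ a →
      (∑ j ∈ E.filter (fun j => owner j = b), v j * fgx v s C E j) /
          (∑ j ∈ E, v j * fgx v s C E j) ≤
        (∑ j ∈ E.filter (fun j => owner j = b), v j * fgx v s C (E.erase i) j) /
          (∑ j ∈ E.erase i, v j * fgx v s C (E.erase i) j)) ∧
    ((∑ j ∈ (E.erase i).filter (fun j => owner j = a), v j * fgx v s C (E.erase i) j) /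
        (∑ j ∈ E.erase i, v j * fgx v s C (E.erase i) j) ≤
      (∑ j ∈ E.filter (fun j => owner j = a), v j * fgx v s C E j) /
        (∑ j ∈ E, v j * fgx v s C E j)) := by
  set Tx := ∑ j ∈ E, v j * fgx v s C E j with hTx
  set Ty := ∑ j ∈ E.erase i, v j * fgx v s C (E.erase i) j with hTy
  have hTxpos : 0 < Tx := sum_v_fgx_pos v s hs hv hC ⟨i, hiE⟩
  have hTypos : 0 < Ty := sum_v_fgx_pos v s hs hv hC hne
  -- total value decreases
  have hTyx : Ty ≤ Tx := by
    set z : ι → ℝ := fun j => if j = i then 0 else fgx v s C (E.erase i) j with hz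
    have hz0 : ∀ j, 0 ≤ z j := by
      intro j
      simp only [hz]
      split
      · exact le_rfl
      · exact fgx_nonneg v s C _ j
    have hz1 : ∀ j, z j ≤ 1 := by
      intro j
      simp only [hz]
      split
      · exact zero_le_one
      · exact fgx_le_one v s C _ j
    have hsz : ∑ j ∈ E, s j * z j = ∑ j ∈ E.erase i, s j * fgx v s C (E.erase i) j := by
      rw [← Finset.sum_erase_add E _ hiE]
      simp only [hz, if_pos rfl, mul_zero, add_zero]
      apply Finset.sum_congr rfl
      intro j hj
      rw [if_neg (Finset.mem_erase.1 hj).1]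
    have hvz : ∑ j ∈ E, v j * z j = Ty := by
      rw [hTy, ← Finset.sum_erase_add E _ hiE]
      simp only [hz, if_pos rfl, mul_zero, add_zero]
      apply Finset.sum_congr rfl
      intro j hj
      rw [if_neg (Finset.mem_erase.1 hj).1]
    have hzC : ∑ j ∈ E, s j * z j ≤ C := by
      rw [hsz, sum_s_fgx v s hvinj hs hC]
      exact min_le_left _ _
    have h := fgx_opt v s hvinj hs hv hC E z hz0 hz1 hzC
    rw [hvz] at h
    exact h
  -- numerator monotonicity for any subset avoiding i
  have hnum : ∀ F : Finset ι, F ⊆ E → i ∉ F →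
      ∑ j ∈ F, v j * fgx v s C E j ≤ ∑ j ∈ F, v j * fgx v s C (E.erase i) j := by
    intro F hFE hiF
    apply Finset.sum_le_sum
    intro j hj
    have hj' : j ∈ E.erase i := Finset.mem_erase.2 ⟨fun h => hiF (h ▸ hj), hFE hj⟩
    exact mul_le_mul_of_nonneg_left (fgx_erase_le v s hs C hj') (hv j).le
  have hratio : ∀ F : Finset ι, F ⊆ E → i ∉ F →
      (∑ j ∈ F, v j * fgx v s C E j) / Tx ≤
        (∑ j ∈ F, v j * fgx v s C (E.erase i) j) / Ty := by
    intro F hFE hiF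
    have h1 := hnum F hFE hiF
    have h0 : 0 ≤ ∑ j ∈ F, v j * fgx v s C E j :=
      Finset.sum_nonneg (fun j _ => mul_nonneg (hv j).le (fgx_nonneg v s C E j))
    calc (∑ j ∈ F, v j * fgx v s C E j) / Tx
        ≤ (∑ j ∈ F, v j * fgx v s C E j) / Ty :=
          div_le_div_of_nonneg_left h0 hTypos hTyx
      _ ≤ (∑ j ∈ F, v j * fgx v s C (E.erase i) j) / Ty :=
          div_le_div_of_nonneg_right h1 hTypos.le
  constructor
  · intro b hb
    have hiF : i ∉ E.filter (fun j => owner j = b) := by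
      simp [hia, hb.symm]
    exact hratio _ (Finset.filter_subset _ _) hiF
  · -- complement trick
    set F := E.filter (fun j => ¬ owner j = a) with hF
    have hiF : i ∉ F := by simp [hF, hia]
    have hFy : (E.erase i).filter (fun j => ¬ owner j = a) = F := by
      rw [hF, Finset.filter_erase, Finset.erase_eq_of_notMem hiF]
    set Nx := ∑ j ∈ F, v j * fgx v s C E j with hNx
    set Ny := ∑ j ∈ F, v j * fgx v s C (E.erase i) j with hNy
    have hsplitx : (∑ j ∈ E.filter (fun j => owner j = a), v j * fgx v s C E j) = Tx - Nx := by
      rw [hTx, hNx, hF, ← Finset.sum_filter_add_sum_filter_not E (fun j => owner j = a)]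
      ring
    have hsplity : (∑ j ∈ (E.erase i).filter (fun j => owner j = a),
        v j * fgx v s C (E.erase i) j) = Ty - Ny := by
      rw [hTy, hNy, ← hFy,
        ← Finset.sum_filter_add_sum_filter_not (E.erase i) (fun j => owner j = a)]
      ring
    rw [hsplitx, hsplity, div_le_div_iff₀ hTypos hTxpos]
    have hNr := hratio F (Finset.filter_subset _ _) hiF
    rw [← hNx, ← hNy] at hNr
    rw [div_le_div_iff₀ hTxpos hTypos] at hNr
    nlinarith [hNr]
end

section
/- Let E and E' be sets of items of unit-density instances and let a be an agent such that E a-dominates E'. Then Σ_{i∈E_a} v_i x_i(E) ≥ Σ_{i∈E'_a} v_i x_i(E'), where x denotes the fractional greedy solution. -/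
open Finset

/-- The fractional greedy solution for a unit-density set of items (the size of each item
equals its value): items are packed in decreasing order of value until the capacity is
reached. -/
noncomputable def udx {ι : Type*} (v : ι → ℝ) (C : ℝ) (E : Finset ι) (i : ι) : ℝ :=
  min 1 (max 0 ((C - ∑ j ∈ E.filter (fun j => v i < v j), v j) / v i))

/-- The `k`-th largest value (1-indexed) among the items of `F`. -/
noncomputable def kthLargest {ι : Type*} (v : ι → ℝ) (F : Finset ι) (k : ℕ) : ℝ :=
  ((F.image v).sort (· ≤ ·)).reverse.getD (k - 1) 0

/-- `E` `a`-dominates `E'`: the values of agent `a`'s items in `E` are lexicographically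
larger than those in `E'`, and the values of the items of the other agents in `E` are
lexicographically smaller than those in `E'`. -/
def aDominates {ι A : Type*} [DecidableEq ι] [DecidableEq A]
    (v : ι → ℝ) (owner : ι → A) (a : A) (E E' : Finset ι) : Prop :=
  (E'.filter (fun i => owner i = a)).card ≤ (E.filter (fun i => owner i = a)).card ∧
  (E.filter (fun i => ¬ owner i = a)).card ≤ (E'.filter (fun i => ¬ owner i = a)).card ∧
  (∀ k : ℕ, 1 ≤ k → k ≤ (E'.filter (fun i => owner i = a)).card →
    kthLargest v (E'.filter (fun i => owner i = a)) k ≤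
      kthLargest v (E.filter (fun i => owner i = a)) k) ∧
  (∀ k : ℕ, 1 ≤ k → k ≤ (E.filter (fun i => ¬ owner i = a)).card →
    kthLargest v (E.filter (fun i => ¬ owner i = a)) k ≤
      kthLargest v (E'.filter (fun i => ¬ owner i = a)) k)

/-!
Split the load above each of `a`'s items into `a`'s own load `s` and the competitors' load
`N t = ∑ {w | w > t}`. Packing `a`'s values `x₁ > x₂ > ⋯` in turn, item `xₖ` receives
`min xₖ (C - N xₖ - s)⁺`, so `a`'s share is a function of the decreasing list of `a`'s values and
of the antitone function `N`. This share grows when the list grows pointwise and when `N` shrinks;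
the induction goes through because raising the own load by `δ` costs the remaining items at most
`δ`.
-/

/-- The value packed from the decreasing list `L` of own items when the competitors' items above
value `x` have total size `N x` and own items of total size `s` are already packed. -/
noncomputable def packedValue (C : ℝ) (N : ℝ → ℝ) : List ℝ → ℝ → ℝ
  | [], _ => 0
  | x :: L, s => min x (max 0 (C - N x - s)) + packedValue C N L (s + x)

section packedValue

variable {C : ℝ} {N : ℝ → ℝ}

@[simp]
lemma packedValue_nil (s : ℝ) : packedValue C N [] s = 0 := rfl

lemma packedValue_cons (x : ℝ) (L : List ℝ) (s : ℝ) :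
    packedValue C N (x :: L) s = min x (max 0 (C - N x - s)) + packedValue C N L (s + x) := rfl

lemma packedValue_nonneg {L : List ℝ} (hL : ∀ x ∈ L, 0 ≤ x) (s : ℝ) :
    0 ≤ packedValue C N L s := by
  induction L generalizing s with
  | nil => rfl
  | cons x L ih =>
    rw [List.forall_mem_cons] at hL
    exact add_nonneg (le_min hL.1 (le_max_left _ _)) (ih hL.2 _)

lemma min_max_zero_add_max_zero_sub {a : ℝ} (ha : 0 ≤ a) (c : ℝ) :
    min a (max 0 c) + max 0 (c - a) = max 0 c := by
  grind

lemma packedValue_le (hN : Antitone N) {L : List ℝ} (hL : ∀ x ∈ L, 0 ≤ x)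
    (hsort : L.Pairwise (· ≥ ·)) {y : ℝ} (hy : ∀ x ∈ L, x ≤ y) (s : ℝ) :
    packedValue C N L s ≤ max 0 (C - N y - s) := by
  induction L generalizing s y with
  | nil => exact le_max_left _ _
  | cons x L ih =>
    rw [List.forall_mem_cons] at hL hy
    rw [List.pairwise_cons] at hsort
    have hrest := ih hL.2 hsort.2 hsort.1 (s + x)
    rw [← sub_sub] at hrest
    have hNy : N y ≤ N x := hN hy.1
    calc packedValue C N (x :: L) s
        ≤ min x (max 0 (C - N x - s)) + max 0 (C - N x - s - x) := by
          rw [packedValue_cons]; gcongr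
      _ = max 0 (C - N x - s) := min_max_zero_add_max_zero_sub hL.1 _
      _ ≤ max 0 (C - N y - s) := by gcongr

lemma packedValue_le_add (hN : Antitone N) {L : List ℝ} (hL : ∀ x ∈ L, 0 ≤ x)
    (hsort : L.Pairwise (· ≥ ·)) (s : ℝ) {δ : ℝ} (hδ : 0 ≤ δ) :
    packedValue C N L s ≤ packedValue C N L (s + δ) + δ := by
  induction L generalizing s with
  | nil => simpa using hδ
  | cons x L ih =>
    have hrest := packedValue_nonneg (C := C) (N := N) (List.forall_mem_cons.1 hL).2 (s + δ + x)
    rw [packedValue_cons, packedValue_cons, ← sub_sub]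
    by_cases hx : x ≤ C - N x - s - δ
    · have ih' := ih (List.forall_mem_cons.1 hL).2 (List.pairwise_cons.1 hsort).2 (s + x)
      rw [min_eq_left (le_max_of_le_right (by linarith)), min_eq_left (le_max_of_le_right hx),
        add_right_comm s δ x]
      linarith
    · have hhead := packedValue_le (C := C) hN hL hsort
        (List.forall_mem_cons.2 ⟨le_rfl, (List.pairwise_cons.1 hsort).1⟩) s
      rw [packedValue_cons] at hhead
      calc min x (max 0 (C - N x - s)) + packedValue C N L (s + x)
          ≤ max 0 (C - N x - s) := hhead
        _ ≤ max 0 (C - N x - s - δ) + δ :=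
          max_le (add_nonneg (le_max_left _ _) hδ) (by linarith [le_max_right 0 (C - N x - s - δ)])
        _ ≤ min x (max 0 (C - N x - s - δ)) + packedValue C N L (s + δ + x) + δ := by
          rw [min_eq_right (max_le (hL x List.mem_cons_self) (not_le.1 hx).le)]
          linarith

lemma packedValue_mono {N' : ℝ → ℝ} (hN : Antitone N) (hN' : Antitone N') (hNN' : N ≤ N')
    {L L' : List ℝ} (hL : ∀ x ∈ L, 0 ≤ x) (hL' : ∀ x ∈ L', 0 ≤ x)
    (hsort : L.Pairwise (· ≥ ·)) (hsort' : L'.Pairwise (· ≥ ·))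
    (hLL' : List.Forall₂ (· ≤ ·) L' (L.take L'.length)) (s : ℝ) :
    packedValue C N' L' s ≤ packedValue C N L s := by
  induction L' generalizing L s with
  | nil => exact packedValue_nonneg hL s
  | cons x' L' ih =>
    obtain _ | ⟨x, L⟩ := L
    · simp at hLL'
    rw [List.length_cons, List.take_succ_cons, List.forall₂_cons] at hLL'
    have hhead' := packedValue_le (C := C) hN' hL' hsort'
      (List.forall_mem_cons.2 ⟨le_rfl, (List.pairwise_cons.1 hsort').1⟩) s
    rw [List.forall_mem_cons] at hL hL'
    rw [List.pairwise_cons] at hsort hsort'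
    have hNx : N x ≤ N' x' := (hNN' x).trans (hN' hLL'.1)
    by_cases hfull : x' ≤ C - N' x' - s ∧ x ≤ C - N x - s
    · have ih' := ih hL.2 hL'.2 hsort.2 hsort'.2 hLL'.2 (s + x')
      have hlip := packedValue_le_add (C := C) hN hL.2 hsort.2 (s + x') (sub_nonneg.2 hLL'.1)
      rw [show s + x' + (x - x') = s + x by ring] at hlip
      rw [packedValue_cons, packedValue_cons, min_eq_left (le_max_of_le_right hfull.1),
        min_eq_left (le_max_of_le_right hfull.2)]
      linarith
    · have hc' : C - N' x' - s ≤ x := by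
        by_contra! h
        exact hfull ⟨by linarith, by linarith⟩
      calc packedValue C N' (x' :: L') s
          ≤ max 0 (C - N' x' - s) := hhead'
        _ ≤ min x (max 0 (C - N x - s)) :=
          le_min (max_le hL.1 hc') (max_le_max le_rfl (by linarith))
        _ ≤ packedValue C N (x :: L) s := by
          rw [packedValue_cons]
          exact le_add_of_nonneg_right (packedValue_nonneg hL.2 _)

end packedValue

lemma Finset.reverse_sort_le {α : Type*} [LinearOrder α] (s : Finset α) :
    (s.sort (· ≤ ·)).reverse = s.sort (· ≥ ·) :=
  List.Perm.eq_of_pairwise' (List.pairwise_reverse.2 (s.pairwise_sort _)) (s.pairwise_sort _)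
    ((List.reverse_perm _).trans ((s.sort_perm_toList _).trans (s.sort_perm_toList _).symm))

lemma List.forall₂_take_length_of_getD {α : Type*} (R : α → α → Prop) (d : α)
    {l₁ l₂ : List α} (hlen : l₁.length ≤ l₂.length)
    (h : ∀ j < l₁.length, R (l₁.getD j d) (l₂.getD j d)) :
    List.Forall₂ R l₁ (l₂.take l₁.length) := by
  rw [List.forall₂_iff_get]
  refine ⟨by simp [hlen], fun i h₁ _ => ?_⟩
  simpa [List.getD_eq_getElem, h₁, h₁.trans_le hlen] using h i h₁

noncomputable def loadAbove (l : List ℝ) (t : ℝ) : ℝ := (l.map fun x => if t < x then x else 0).sum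

lemma loadAbove_sort (W : Finset ℝ) (t : ℝ) :
    loadAbove (W.sort (· ≥ ·)) t = ∑ x ∈ W with t < x, x := by
  rw [loadAbove, sum_filter, ← sum_map_toList]
  exact ((W.sort_perm_toList _).map _).sum_eq

lemma loadAbove_antitone {l : List ℝ} (hl : ∀ x ∈ l, 0 ≤ x) : Antitone (loadAbove l) :=
  fun t t' htt' => List.sum_le_sum fun x hx => by
    split_ifs <;> linarith [hl x hx]

lemma loadAbove_le_of_forall₂ {M K : List ℝ} (hK : ∀ x ∈ K, 0 ≤ x)
    (hMK : List.Forall₂ (· ≤ ·) M K) (t : ℝ) : loadAbove M t ≤ loadAbove K t := by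
  induction hMK with
  | nil => rfl
  | cons hab _ ih =>
    rw [List.forall_mem_cons] at hK
    simp only [loadAbove, List.map_cons, List.sum_cons] at ih ⊢
    gcongr
    · split_ifs <;> linarith
    · exact ih hK.2

lemma loadAbove_mono {M K : List ℝ} (hK : ∀ x ∈ K, 0 ≤ x)
    (hMK : List.Forall₂ (· ≤ ·) M (K.take M.length)) (t : ℝ) :
    loadAbove M t ≤ loadAbove K t :=
  (loadAbove_le_of_forall₂ (fun x hx => hK x (List.mem_of_mem_take hx)) hMK t).trans <|
    List.Sublist.sum_le_sum ((K.take_sublist _).map _) fun x hx => by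
      obtain ⟨y, hy, rfl⟩ := List.mem_map.1 hx
      split_ifs <;> simp [hK y hy]

lemma sum_min_eq_packedValue (C : ℝ) (N : ℝ → ℝ) (V : Finset ℝ) (s : ℝ) :
    ∑ x ∈ V, min x (max 0 (C - N x - ∑ y ∈ V with x < y, y - s)) =
      packedValue C N (V.sort (· ≥ ·)) s := by
  induction V using Finset.induction_on_max generalizing s with
  | empty => simp
  | insert m V hm ih =>
    have hmV : m ∉ V := fun h => lt_irrefl m (hm m h)
    rw [sort_insert (· ≥ ·) (fun x hx => (hm x hx).le) hmV, packedValue_cons, sum_insert hmV,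
      ← ih]
    congr 1
    · have : ∀ y ∈ insert m V, ¬m < y := fun y hy =>
        not_lt.2 ((mem_insert.1 hy).elim le_of_eq fun hy => (hm y hy).le)
      rw [filter_false_of_mem this, sum_empty, sub_zero]
    · refine sum_congr rfl fun x hx => ?_
      rw [filter_insert, if_pos (hm x hx), sum_insert (by simp [hmV])]
      ring_nf

section items

variable {ι : Type*} {v : ι → ℝ}

lemma mul_udx {i : ι} (hi : 0 < v i) (C : ℝ) (E : Finset ι) :
    v i * udx v C E i = min (v i) (max 0 (C - ∑ j ∈ E with v i < v j, v j)) := by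
  rw [udx, mul_min_of_nonneg _ _ hi.le, mul_one, mul_max_of_nonneg _ _ hi.le, mul_zero,
    mul_div_cancel₀ _ hi.ne']

lemma sum_filter_mul_udx_eq_packedValue [DecidableEq ι] (hv : ∀ i, 0 < v i)
    (hvinj : Function.Injective v) (C : ℝ) (E : Finset ι) (p : ι → Prop) [DecidablePred p] :
    ∑ i ∈ E with p i, v i * udx v C E i =
      packedValue C (loadAbove (((E.filter fun i => ¬ p i).image v).sort (· ≥ ·)))
        (((E.filter p).image v).sort (· ≥ ·)) 0 := by
  rw [← sum_min_eq_packedValue, sum_image hvinj.injOn]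
  refine sum_congr rfl fun i hi => ?_
  rw [mul_udx (hv i), loadAbove_sort, ← sum_filter_add_sum_filter_not (E.filter (v i < v ·)) p]
  simp only [filter_image, sum_image hvinj.injOn, filter_filter, and_comm, sub_zero]
  ring_nf

lemma kthLargest_eq_getD (F : Finset ι) (k : ℕ) :
    kthLargest v F k = ((F.image v).sort (· ≥ ·)).getD (k - 1) 0 := by
  rw [kthLargest, Finset.reverse_sort_le]

lemma forall₂_sort_image_of_kthLargest_le (hv : Function.Injective v) {F F' : Finset ι}
    (hcard : F'.card ≤ F.card)
    (hk : ∀ k, 1 ≤ k → k ≤ F'.card → kthLargest v F' k ≤ kthLargest v F k) :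
    List.Forall₂ (· ≤ ·) ((F'.image v).sort (· ≥ ·))
      (((F.image v).sort (· ≥ ·)).take ((F'.image v).sort (· ≥ ·)).length) := by
  refine List.forall₂_take_length_of_getD _ 0 (by simpa [card_image_of_injective _ hv]) ?_
  intro j hj
  rw [length_sort, card_image_of_injective _ hv] at hj
  simpa [kthLargest_eq_getD] using hk (j + 1) (by omega) (by omega)

lemma nonneg_of_mem_sort_image (hv : ∀ i, 0 < v i) (F : Finset ι) :
    ∀ x ∈ (F.image v).sort (· ≥ ·), 0 ≤ x := fun x hx => by
  obtain ⟨i, -, rfl⟩ := mem_image.1 ((mem_sort _).1 hx)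
  exact (hv i).le

end items

theorem stmt_9_general {ι A : Type*} [DecidableEq ι] [DecidableEq A]
    (v : ι → ℝ) (owner : ι → A) (C : ℝ)
    (hv : ∀ i, 0 < v i)
    (hvinj : Function.Injective v)
    (E E' : Finset ι) (a : A)
    (hdom : aDominates v owner a E E') :
    ∑ i ∈ E'.filter (fun i => owner i = a), v i * udx v C E' i ≤
      ∑ i ∈ E.filter (fun i => owner i = a), v i * udx v C E i := by
  obtain ⟨hcard_a, hcard_n, hk_a, hk_n⟩ := hdom
  have hnonneg := nonneg_of_mem_sort_image hv
  rw [sum_filter_mul_udx_eq_packedValue hv hvinj, sum_filter_mul_udx_eq_packedValue hv hvinj]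
  exact packedValue_mono (loadAbove_antitone (hnonneg _)) (loadAbove_antitone (hnonneg _))
    (loadAbove_mono (hnonneg _) (forall₂_sort_image_of_kthLargest_le hvinj hcard_n hk_n))
    (hnonneg _) (hnonneg _) (pairwise_sort _ _) (pairwise_sort _ _)
    (forall₂_sort_image_of_kthLargest_le hvinj hcard_a hk_a) 0

/-- if `E` `a`-dominates `E'`, then the value of agent `a`'s items in the
fractional greedy solution for `E` is at least that in the fractional greedy solution
for `E'`. -/
theorem stmt_9 {ι A : Type*} [DecidableEq ι] [DecidableEq A]
    (v : ι → ℝ) (owner : ι → A) (C : ℝ)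
    (hC : 0 < C) (hv : ∀ i, 0 < v i) (hvC : ∀ i, v i ≤ C)
    (hvinj : Function.Injective v)
    (E E' : Finset ι) (a : A)
    (hdom : aDominates v owner a E E') :
    ∑ i ∈ E'.filter (fun i => owner i = a), v i * udx v C E' i ≤
      ∑ i ∈ E.filter (fun i => owner i = a), v i * udx v C E i :=
  stmt_9_general v owner C hv hvinj E E' a hdom
end

section
/- Let E and D be sets of items of unit-density instances and let A be a subset of agents such that |E_A| ≤ |D_A|, E∖E_A = D∖D_A, and for every k ∈ [|E_A|] the k-th largest value among items of E_A is at most the k-th largest value among items of D_A (where E_A = ⋃_{a∈A} E_a and D_A = ⋃_{a∈A} D_a). Then Σ_{i∈E_A} v_i x_i(E) ≤ Σ_{i∈D_A} v_i x_i(D), where x denotes the fractional greedy solution. -/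
open Finset

lemma udx_mul {ι : Type*} (v : ι → ℝ) (C : ℝ) (F : Finset ι) (i : ι) (hvi : 0 < v i) :
    v i * udx v C F i
      = min (v i) (max 0 (C - ∑ j ∈ F.filter (fun j => v i < v j), v j)) := by
  unfold udx
  rw [mul_min_of_nonneg _ _ hvi.le, mul_one, mul_max_of_nonneg _ _ hvi.le, mul_zero,
    mul_div_cancel₀ _ (ne_of_gt hvi)]

lemma min_sub_min (C p x : ℝ) (hx : 0 ≤ x) :
    min x (max 0 (C - p)) = min C (p + x) - min C p := by
  simp only [min_def, max_def]
  split_ifs <;> linarith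

/-- The total value packed by the greedy fractional solution is `min C (∑ v)`. -/
lemma total_eq {ι : Type*} [DecidableEq ι] (v : ι → ℝ) (C : ℝ) (hC : 0 ≤ C)
    (hv : ∀ i, 0 < v i) (hvinj : Function.Injective v) (F : Finset ι) :
    ∑ i ∈ F, v i * udx v C F i = min C (∑ i ∈ F, v i) := by
  induction F using Finset.strongInduction with
  | _ F ih =>
    rcases F.eq_empty_or_nonempty with rfl | hne
    · simp [min_eq_right hC]
    obtain ⟨m, hm, hmin⟩ := F.exists_min_image v hne
    have hFm : F.filter (fun j => v m < v j) = F.erase m := by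
      ext j
      simp only [Finset.mem_filter, Finset.mem_erase]
      constructor
      · rintro ⟨hj, hlt⟩
        exact ⟨fun h => by subst h; exact lt_irrefl _ hlt, hj⟩
      · rintro ⟨hne', hj⟩
        exact ⟨hj, (hmin j hj).lt_of_ne (fun h => hne' (hvinj h).symm)⟩
    have hrec : ∑ i ∈ F.erase m, v i * udx v C F i
        = min C (∑ i ∈ F.erase m, v i) := by
      rw [Finset.sum_congr rfl (fun i hi => ?_), ih _ (Finset.erase_ssubset hm)]
      have hfe : F.filter (fun j => v i < v j)
          = (F.erase m).filter (fun j => v i < v j) := by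
        rw [Finset.filter_erase, Finset.erase_eq_of_notMem]
        simp only [Finset.mem_filter, not_and]
        intro _ hlt
        exact absurd (hmin i (Finset.mem_of_mem_erase hi)) (not_le.2 hlt)
      unfold udx
      rw [hfe]
    rw [← Finset.add_sum_erase _ _ hm, hrec, udx_mul v C F m (hv m), hFm,
      min_sub_min C _ _ (hv m).le, ← Finset.add_sum_erase _ v hm]
    ring_nf

lemma list_sum_getD (g : ℝ → ℝ) : ∀ l : List ℝ,
    (l.map g).sum = ∑ k ∈ Finset.range l.length, g (l.getD k 0)
  | [] => by simp
  | a :: l => by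
    rw [List.map_cons, List.sum_cons, list_sum_getD g l, List.length_cons,
      Finset.sum_range_succ']
    simp [add_comm]

lemma sum_g_eq {ι : Type*} [DecidableEq ι] (v : ι → ℝ) (hvinj : Function.Injective v)
    (g : ℝ → ℝ) (F : Finset ι) :
    ∑ i ∈ F, g (v i) = ∑ k ∈ Finset.range F.card, g (kthLargest v F (k + 1)) := by
  have h1 : ∑ i ∈ F, g (v i) = ∑ y ∈ F.image v, g y :=
    (Finset.sum_image (fun a _ b _ h => hvinj h)).symm
  have h2 : ∑ y ∈ F.image v, g y = (((F.image v).sort (· ≤ ·)).reverse.map g).sum := by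
    rw [List.map_reverse, List.sum_reverse, ← Finset.sum_map_toList]
    exact (List.Perm.sum_eq (List.Perm.map g (Finset.sort_perm_toList _ _))).symm
  rw [h1, h2, list_sum_getD]
  have hlen : ((F.image v).sort (· ≤ ·)).reverse.length = F.card := by
    rw [List.length_reverse, Finset.length_sort, Finset.card_image_of_injective _ hvinj]
  rw [hlen]
  refine Finset.sum_congr rfl (fun k _ => ?_)
  unfold kthLargest
  norm_num

/-- Key majorization consequence: for every nonnegative threshold `t`, the total value of
items above `t` cannot decrease. -/
lemma sum_filter_le {ι : Type*} [DecidableEq ι] (v : ι → ℝ)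
    (hvinj : Function.Injective v)
    (ES DS : Finset ι) (hcard : ES.card ≤ DS.card)
    (hvals : ∀ k : ℕ, 1 ≤ k → k ≤ ES.card → kthLargest v ES k ≤ kthLargest v DS k)
    (t : ℝ) (ht : 0 ≤ t) :
    ∑ i ∈ ES.filter (fun i => t < v i), v i ≤ ∑ i ∈ DS.filter (fun i => t < v i), v i := by
  set g : ℝ → ℝ := fun x => if t < x then x else 0 with hg
  have hgnn : ∀ x, 0 ≤ g x := by
    intro x; simp only [hg]
    split_ifs with h
    · linarith
    · exact le_refl 0
  have hgmono : ∀ a b : ℝ, a ≤ b → g a ≤ g b := by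
    intro a b hab; simp only [hg]
    split_ifs with h1 h2 h2 <;> try linarith
  have hES : ∑ i ∈ ES.filter (fun i => t < v i), v i = ∑ i ∈ ES, g (v i) := by
    rw [Finset.sum_filter]
  have hDS : ∑ i ∈ DS.filter (fun i => t < v i), v i = ∑ i ∈ DS, g (v i) := by
    rw [Finset.sum_filter]
  rw [hES, hDS, sum_g_eq v hvinj g ES, sum_g_eq v hvinj g DS]
  calc ∑ k ∈ Finset.range ES.card, g (kthLargest v ES (k + 1))
      ≤ ∑ k ∈ Finset.range ES.card, g (kthLargest v DS (k + 1)) := by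
        refine Finset.sum_le_sum (fun k hk => hgmono _ _ ?_)
        exact hvals (k + 1) (by omega) (by simpa using Finset.mem_range.1 hk)
    _ ≤ ∑ k ∈ Finset.range DS.card, g (kthLargest v DS (k + 1)) :=
        Finset.sum_le_sum_of_subset_of_nonneg
          (Finset.range_subset_range.2 hcard) (fun k _ _ => hgnn _)

/-- if the values of the items of the agents in `S` lexicographically
increase from `E` to `D` while the items of all other agents remain the same, then the
total value of the items of the agents in `S` in the fractional greedy solution cannot be
smaller in `D` than in `E`. -/
theorem stmt_10 {ι A : Type*} [DecidableEq ι] [DecidableEq A]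
    (v : ι → ℝ) (owner : ι → A) (C : ℝ)
    (hC : 0 < C) (hv : ∀ i, 0 < v i) (hvC : ∀ i, v i ≤ C)
    (hvinj : Function.Injective v)
    (E D : Finset ι) (S : Finset A)
    (hcard : (E.filter (fun i => owner i ∈ S)).card ≤ (D.filter (fun i => owner i ∈ S)).card)
    (hrest : E.filter (fun i => owner i ∉ S) = D.filter (fun i => owner i ∉ S))
    (hvals : ∀ k : ℕ, 1 ≤ k → k ≤ (E.filter (fun i => owner i ∈ S)).card →
      kthLargest v (E.filter (fun i => owner i ∈ S)) k ≤
        kthLargest v (D.filter (fun i => owner i ∈ S)) k) :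
    ∑ i ∈ E.filter (fun i => owner i ∈ S), v i * udx v C E i ≤
      ∑ i ∈ D.filter (fun i => owner i ∈ S), v i * udx v C D i := by
  classical
  set p : ι → Prop := fun i => owner i ∈ S with hp
  -- key inequality for all nonnegative thresholds
  have hkey : ∀ t : ℝ, 0 ≤ t →
      ∑ i ∈ (E.filter p).filter (fun i => t < v i), v i
        ≤ ∑ i ∈ (D.filter p).filter (fun i => t < v i), v i :=
    fun t ht => sum_filter_le v hvinj _ _ hcard hvals t ht
  -- splitting sums over E and D
  have hsplitE : ∑ i ∈ E.filter p, v i * udx v C E i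
      = min C (∑ i ∈ E, v i) - ∑ i ∈ E.filter (fun i => ¬ p i), v i * udx v C E i := by
    rw [← total_eq v C hC.le hv hvinj E,
      ← Finset.sum_filter_add_sum_filter_not E p (fun i => v i * udx v C E i)]
    ring
  have hsplitD : ∑ i ∈ D.filter p, v i * udx v C D i
      = min C (∑ i ∈ D, v i) - ∑ i ∈ E.filter (fun i => ¬ p i), v i * udx v C D i := by
    rw [← total_eq v C hC.le hv hvinj D,
      ← Finset.sum_filter_add_sum_filter_not D p (fun i => v i * udx v C D i), hrest]
    ring
  -- total sums comparison
  have hfiltE : (E.filter p).filter (fun i => (0:ℝ) < v i) = E.filter p :=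
    Finset.filter_true_of_mem (fun i _ => hv i)
  have hfiltD : (D.filter p).filter (fun i => (0:ℝ) < v i) = D.filter p :=
    Finset.filter_true_of_mem (fun i _ => hv i)
  have hsum : ∑ i ∈ E, v i ≤ ∑ i ∈ D, v i := by
    rw [← Finset.sum_filter_add_sum_filter_not E p v,
      ← Finset.sum_filter_add_sum_filter_not D p v, hrest]
    have := hkey 0 le_rfl
    rw [hfiltE, hfiltD] at this
    linarith
  have hmin : min C (∑ i ∈ E, v i) ≤ min C (∑ i ∈ D, v i) :=
    min_le_min le_rfl hsum
  -- pointwise comparison on the unchanged items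
  have hR : ∀ j ∈ E.filter (fun i => ¬ p i),
      v j * udx v C D j ≤ v j * udx v C E j := by
    intro j hj
    rw [udx_mul v C E j (hv j), udx_mul v C D j (hv j)]
    refine min_le_min le_rfl (max_le_max le_rfl (sub_le_sub_left ?_ C))
    have hE' : ∑ i ∈ E.filter (fun i => v j < v i), v i
        = ∑ i ∈ (E.filter p).filter (fun i => v j < v i), v i
          + ∑ i ∈ (E.filter (fun i => ¬ p i)).filter (fun i => v j < v i), v i := by
      rw [Finset.filter_comm, Finset.filter_comm (fun i => ¬ p i),
        Finset.sum_filter_add_sum_filter_not (E.filter (fun i => v j < v i)) p v]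
    have hD' : ∑ i ∈ D.filter (fun i => v j < v i), v i
        = ∑ i ∈ (D.filter p).filter (fun i => v j < v i), v i
          + ∑ i ∈ (E.filter (fun i => ¬ p i)).filter (fun i => v j < v i), v i := by
      rw [hrest, Finset.filter_comm, Finset.filter_comm (fun i => ¬ p i),
        Finset.sum_filter_add_sum_filter_not (D.filter (fun i => v j < v i)) p v]
    rw [hE', hD']
    have := hkey (v j) (hv j).le
    linarith
  have hRsum : ∑ i ∈ E.filter (fun i => ¬ p i), v i * udx v C D i
      ≤ ∑ i ∈ E.filter (fun i => ¬ p i), v i * udx v C E i :=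
    Finset.sum_le_sum hR
  rw [hsplitE, hsplitD]
  linarith
end

section
/- Let β ∈ [1/2, 2/3] and let E be a nonempty set of items of a unit-density instance such that v(Opt(E_a)) < β·C for every agent a. Then i*(E) is the maximum-value item of R(E), i.e., i*(E) = argmax{v_i : i ∈ R(E)}. -/
open Finset

/-- The optimal value of the knapsack problem on a unit-density item set `E`. -/
noncomputable def optValUD {ι : Type*} (v : ι → ℝ) (C : ℝ) (E : Finset ι) : ℝ :=
  sSup ((fun D : Finset ι => ∑ i ∈ D, v i) '' {D : Finset ι | D ⊆ E ∧ ∑ i ∈ D, v i ≤ C})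

/-- `P(E)`: items that fit together with every less valuable item of other agents. -/
noncomputable def Pset {ι A : Type*} [DecidableEq ι] [DecidableEq A]
    (v : ι → ℝ) (owner : ι → A) (C : ℝ) (E : Finset ι) : Finset ι :=
  E.filter (fun i => ∀ j ∈ E, owner j ≠ owner i → v j < v i → v i + v j ≤ C)

/-- `i*(E)`: the most valuable item of `P(E)`. -/
noncomputable def istar {ι A : Type*} [DecidableEq ι] [DecidableEq A] [Nonempty ι]
    (v : ι → ℝ) (owner : ι → A) (C : ℝ) (E : Finset ι) : ι :=
  if h : (Pset v owner C E).Nonempty then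
    ((Pset v owner C E).exists_max_image v h).choose
  else Classical.arbitrary ι

/-- `R(E) = {i*(E)} ∪ {i ∈ E : v_{i*(E)} + v_i ≤ C}`, with `R(∅) = ∅`. -/
noncomputable def Rset {ι A : Type*} [DecidableEq ι] [DecidableEq A] [Nonempty ι]
    (v : ι → ℝ) (owner : ι → A) (C : ℝ) (E : Finset ι) : Finset ι :=
  if E.Nonempty then
    insert (istar v owner C E) (E.filter (fun i => v (istar v owner C E) + v i ≤ C))
  else ∅

/-- if no agent's individual optimum reaches `β·C`, then `i*(E)` is the
maximum-value item of `R(E)`. -/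
theorem stmt_12 {ι A : Type*} [DecidableEq ι] [DecidableEq A] [Nonempty ι]
    (v : ι → ℝ) (owner : ι → A) (C : ℝ)
    (hC : 0 < C) (hv : ∀ i, 0 < v i) (hvC : ∀ i, v i ≤ C)
    (hvinj : Function.Injective v)
    (β : ℝ) (hβ₁ : 1 / 2 ≤ β) (hβ₂ : β ≤ 2 / 3)
    (E : Finset ι) (hE : E.Nonempty)
    (hopt : ∀ a : A, optValUD v C (E.filter (fun i => owner i = a)) < β * C) :
    istar v owner C E ∈ Rset v owner C E ∧
      ∀ j ∈ Rset v owner C E, v j ≤ v (istar v owner C E) := by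
  classical
  -- P(E) is nonempty: the minimum-value item is in it
  obtain ⟨m, hmE, hmin⟩ := E.exists_min_image v hE
  have hP : (Pset v owner C E).Nonempty := by
    refine ⟨m, mem_filter.mpr ⟨hmE, fun j hj _ hlt => ?_⟩⟩
    exact absurd (hmin j hj) (not_le.mpr hlt)
  set i := istar v owner C E with hi
  have hspec : i ∈ Pset v owner C E ∧ ∀ b' ∈ Pset v owner C E, v b' ≤ v i := by
    rw [hi, istar, dif_pos hP]
    exact ((Pset v owner C E).exists_max_image v hP).choose_spec
  have hiE : i ∈ E := (mem_filter.mp hspec.1).1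
  have hRdef : Rset v owner C E = insert i (E.filter fun x => v i + v x ≤ C) := by
    rw [Rset, if_pos hE]
  have hnotP : ∀ x ∈ E, v i < v x →
      ∃ y ∈ E, owner y ≠ owner x ∧ v y < v x ∧ C < v x + v y := by
    intro x hx hvx
    by_contra h
    push_neg at h
    have hxP : x ∈ Pset v owner C E :=
      mem_filter.mpr ⟨hx, fun y hy hne hvy => h y hy hne hvy⟩
    exact absurd (hspec.2 x hxP) (not_le.mpr hvx)
  constructor
  · rw [hRdef]; exact mem_insert_self _ _
  · intro j hj
    rw [hRdef, mem_insert] at hj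
    rcases hj with rfl | hj
    · exact le_refl _
    obtain ⟨hjE, hjC⟩ := mem_filter.mp hj
    by_contra hlt
    push_neg at hlt
    -- v i < v j; consider S = items strictly between i* and j in value
    set S := E.filter (fun x => v i < v x ∧ v x < v j) with hS
    have hSne : S.Nonempty := by
      obtain ⟨k, hkE, _, hkj, hkC⟩ := hnotP j hjE hlt
      refine ⟨k, mem_filter.mpr ⟨hkE, ?_, hkj⟩⟩
      -- v i ≤ C - v j < v k
      linarith
    obtain ⟨x, hxS, hxmin⟩ := S.exists_min_image v hSne
    obtain ⟨hxE, hix, hxj⟩ := mem_filter.mp hxS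
    obtain ⟨y, hyE, _, hyx, hyC⟩ := hnotP x hxE hix
    have hyS : y ∈ S := by
      refine mem_filter.mpr ⟨hyE, ?_, lt_trans hyx hxj⟩
      -- v i ≤ C - v j < C - v x < v y
      linarith
    exact absurd (hxmin y hyS) (not_le.mpr hyx)
end

section
/- Let β ∈ [1/2, 2/3], let E be a nonempty set of items of a unit-density instance such that v(Opt(E_a)) < β·C for every agent a, and let i, j ∈ E be distinct items such that at least one of the following holds: (i) i = i*(E) and v_j > v_i; (ii) i, j ∈ E_a for some agent a and min{v_i, v_j} ≥ (1−β)·C; (iii) i, j ∈ E∖R(E). Then v_i + v_j > C. -/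
open Finset

lemma opt_lb {ι : Type*} (v : ι → ℝ) (C : ℝ) (E' : Finset ι) (D : Finset ι)
    (hD : D ⊆ E') (hsum : ∑ i ∈ D, v i ≤ C) : ∑ i ∈ D, v i ≤ optValUD v C E' :=
  le_csSup ⟨C, by rintro x ⟨D', hD', rfl⟩; exact hD'.2⟩ ⟨D, ⟨hD, hsum⟩, rfl⟩

lemma Pset_nonempty {ι A : Type*} [DecidableEq ι] [DecidableEq A]
    (v : ι → ℝ) (owner : ι → A) (C : ℝ) (E : Finset ι) (hE : E.Nonempty) :
    (Pset v owner C E).Nonempty := by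
  obtain ⟨m, hm, hmin⟩ := E.exists_min_image v hE
  exact ⟨m, by
    simp only [Pset, mem_filter]
    exact ⟨hm, fun l hl _ hlt => absurd (hmin l hl) (not_le.mpr hlt)⟩⟩

lemma istar_spec {ι A : Type*} [DecidableEq ι] [DecidableEq A] [Nonempty ι]
    (v : ι → ℝ) (owner : ι → A) (C : ℝ) (E : Finset ι)
    (h : (Pset v owner C E).Nonempty) :
    istar v owner C E ∈ Pset v owner C E ∧
      ∀ p ∈ Pset v owner C E, v p ≤ v (istar v owner C E) := by
  rw [istar, dif_pos h]
  exact ((Pset v owner C E).exists_max_image v h).choose_spec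

/-- if no agent's individual optimum reaches `β·C`, then two distinct items
`i, j ∈ E` cannot be packed together whenever (i) `i = i*(E)` and `v_j > v_i`, or
(ii) `i` and `j` belong to the same agent and `min{v_i, v_j} ≥ (1−β)·C`, or
(iii) `i, j ∈ E∖R(E)`. -/
theorem stmt_13 {ι A : Type*} [DecidableEq ι] [DecidableEq A] [Nonempty ι]
    (v : ι → ℝ) (owner : ι → A) (C : ℝ)
    (hC : 0 < C) (hv : ∀ i, 0 < v i) (hvC : ∀ i, v i ≤ C)
    (hvinj : Function.Injective v)
    (β : ℝ) (hβ₁ : 1 / 2 ≤ β) (hβ₂ : β ≤ 2 / 3)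
    (E : Finset ι) (hE : E.Nonempty)
    (hopt : ∀ a : A, optValUD v C (E.filter (fun i => owner i = a)) < β * C)
    (i j : ι) (hi : i ∈ E) (hj : j ∈ E) (hij : i ≠ j)
    (hcond :
      (i = istar v owner C E ∧ v i < v j) ∨
      (owner i = owner j ∧ (1 - β) * C ≤ min (v i) (v j)) ∨
      (i ∉ Rset v owner C E ∧ j ∉ Rset v owner C E)) :
    C < v i + v j := by
  by_contra hc
  push_neg at hc
  -- feasible pairs of one agent are worth less than β*C
  have pairlt : ∀ x y : ι, x ∈ E → y ∈ E → x ≠ y → owner x = owner y →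
      v x + v y ≤ C → v x + v y < β * C := by
    intro x y hx hy hxy hown hsum
    have hsub : ({x, y} : Finset ι) ⊆ E.filter (fun k => owner k = owner x) := by
      intro k hk
      simp only [mem_insert, mem_singleton] at hk
      rcases hk with h | h
      · subst h; exact mem_filter.mpr ⟨hx, rfl⟩
      · subst h; exact mem_filter.mpr ⟨hy, hown.symm⟩
    have hps : ∑ k ∈ ({x, y} : Finset ι), v k = v x + v y := Finset.sum_pair hxy
    have := opt_lb v C (E.filter (fun k => owner k = owner x)) {x, y} hsub (by rw [hps]; exact hsum)
    rw [hps] at this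
    exact lt_of_le_of_lt this (hopt (owner x))
  -- singletons are worth less than β*C
  have singlt : ∀ x : ι, x ∈ E → v x < β * C := by
    intro x hx
    have hsub : ({x} : Finset ι) ⊆ E.filter (fun k => owner k = owner x) := by
      intro k hk
      simp only [mem_singleton] at hk
      subst hk; exact mem_filter.mpr ⟨hx, rfl⟩
    have := opt_lb v C (E.filter (fun k => owner k = owner x)) {x} hsub
      (by rw [Finset.sum_singleton]; exact hvC x)
    rw [Finset.sum_singleton] at this
    exact lt_of_le_of_lt this (hopt (owner x))
  have hP := Pset_nonempty v owner C E hE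
  obtain ⟨histar, hmax⟩ := istar_spec v owner C E hP
  set i₀ := istar v owner C E with hi₀
  have histarE : i₀ ∈ E := (mem_filter.mp histar).1
  have histarP : ∀ l ∈ E, owner l ≠ owner i₀ → v l < v i₀ → v i₀ + v l ≤ C :=
    (mem_filter.mp histar).2
  rcases hcond with ⟨rfl, hlt⟩ | ⟨hown, hminv⟩ | ⟨hiR, hjR⟩
  · -- case (i)
    -- take the minimal-value element m of E with v i₀ < v m; show m ∈ Pset
    have hSne : (E.filter (fun k => v i₀ < v k)).Nonempty := ⟨j, mem_filter.mpr ⟨hj, hlt⟩⟩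
    obtain ⟨m, hmS, hmmin⟩ := (E.filter (fun k => v i₀ < v k)).exists_min_image v hSne
    obtain ⟨hmE, hmgt⟩ := mem_filter.mp hmS
    have hmj : v m ≤ v j := hmmin j (mem_filter.mpr ⟨hj, hlt⟩)
    have hmP : m ∈ Pset v owner C E := by
      simp only [Pset, mem_filter]
      refine ⟨hmE, fun l hl _ hlv => ?_⟩
      have hli : v l ≤ v i₀ := by
        by_contra h
        push_neg at h
        exact absurd (hmmin l (mem_filter.mpr ⟨hl, h⟩)) (not_le.mpr hlv)
      linarith [hc]
    exact absurd (hmax m hmP) (not_le.mpr hmgt)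
  · -- case (ii)
    have hvi : (1 - β) * C ≤ v i := le_trans hminv (min_le_left _ _)
    have hvj : (1 - β) * C ≤ v j := le_trans hminv (min_le_right _ _)
    have := pairlt i j hi hj hij hown hc
    nlinarith
  · -- case (iii)
    rw [Rset, if_pos hE] at hiR hjR
    simp only [mem_insert, mem_filter, not_or, not_and] at hiR hjR
    have hiC : C < v i₀ + v i := lt_of_not_ge (hiR.2 hi)
    have hjC : C < v i₀ + v j := lt_of_not_ge (hjR.2 hj)
    have hvii : v i < v i₀ := by linarith [(hv j).le, hc]
    have hvjj : v j < v i₀ := by linarith [(hv i).le, hc]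
    have howni : owner i = owner i₀ := by
      by_contra h
      exact absurd (histarP i hi h hvii) (not_le.mpr hiC)
    have hownj : owner j = owner i₀ := by
      by_contra h
      exact absurd (histarP j hj h hvjj) (not_le.mpr hjC)
    have hpair := pairlt i j hi hj hij (howni.trans hownj.symm) hc
    have hsing := singlt i₀ histarE
    nlinarith
end

section
/- Let M be a deterministic mechanism (defined on all unit-density instances of the strategic knapsack problem, including instances with two agents) that is strategyproof and α-approximate on unit-density instances. Then α ≤ 1/φ, where φ = (1+√5)/2 is the golden ratio. -/
open Finset

/-- ownership function for the hard instance: item 2 belongs to agent 2,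
all other items to agent 1. -/
def ownerF : ℕ → ℕ := fun i => if i = 2 then 2 else 1

lemma optValUD_lower {v : ℕ → ℝ} {C : ℝ} {E D : Finset ℕ} (hD : D ⊆ E)
    (hsum : ∑ i ∈ D, v i ≤ C) : ∑ i ∈ D, v i ≤ optValUD v C E := by
  apply le_csSup
  · exact ⟨C, by rintro x ⟨D', ⟨-, h⟩, rfl⟩; exact h⟩
  · exact ⟨D, ⟨hD, hsum⟩, rfl⟩

set_option maxHeartbeats 1000000 in
/-- any deterministic mechanism defined on all unit-density instances
(items indexed by `ℕ`, agents indexed by `ℕ`, so in particular instances with two agents)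
that is strategyproof and `α`-approximate on unit-density instances satisfies `α ≤ 1/φ`,
where `φ = (1+√5)/2` is the golden ratio. -/
theorem stmt_17 (α : ℝ)
    (M : (ℕ → ℝ) → (ℕ → ℕ) → ℝ → Finset ℕ → Finset ℕ)
    (hfeas : ∀ (v : ℕ → ℝ) (owner : ℕ → ℕ) (C : ℝ),
      0 < C → (∀ i, 0 < v i) → (∀ i, v i ≤ C) → Function.Injective v →
      ∀ E : Finset ℕ, M v owner C E ⊆ E ∧ ∑ i ∈ M v owner C E, v i ≤ C)
    (hSP : ∀ (v : ℕ → ℝ) (owner : ℕ → ℕ) (C : ℝ),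
      0 < C → (∀ i, 0 < v i) → (∀ i, v i ≤ C) → Function.Injective v →
      ∀ E : Finset ℕ, ∀ a : ℕ, ∀ E' ⊆ E, E \ E' ⊆ E.filter (fun i => owner i = a) →
        ∑ i ∈ (M v owner C E').filter (fun i => owner i = a), v i ≤
          ∑ i ∈ (M v owner C E).filter (fun i => owner i = a), v i)
    (happrox : ∀ (v : ℕ → ℝ) (owner : ℕ → ℕ) (C : ℝ),
      0 < C → (∀ i, 0 < v i) → (∀ i, v i ≤ C) → Function.Injective v →
      ∀ E : Finset ℕ, α * optValUD v C E ≤ ∑ i ∈ M v owner C E, v i) :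
    α ≤ 1 / ((1 + Real.sqrt 5) / 2) := by
  by_contra hcon
  push_neg at hcon
  set s := Real.sqrt 5 with hs
  have hs0 : 0 ≤ s := Real.sqrt_nonneg 5
  have hs2 : s * s = 5 := Real.mul_self_sqrt (by norm_num)
  have hsl : 2 < s := by nlinarith
  have hsu : s < 13/5 := by nlinarith
  set g : ℝ := (s - 1) / 2 with hgdef
  have hg1 : 1/2 < g := by rw [hgdef]; linarith
  have hg2 : g < 4/5 := by rw [hgdef]; linarith
  have hgg : g * (g + 1) = 1 := by rw [hgdef]; nlinarith
  have hφg : 1 / ((1 + s) / 2) = g := by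
    rw [div_eq_iff (by linarith), hgdef]; nlinarith
  have hα : g < α := by rw [← hφg]; exact hcon
  set ε : ℝ := min ((α - g) / 2) (1/10) with hεdef
  have hε0 : 0 < ε := lt_min (by linarith) (by norm_num)
  have hε1 : ε ≤ 1/10 := min_le_right _ _
  have hε2 : g + ε < α := by
    have h := min_le_left ((α - g) / 2) (1/10)
    rw [hεdef]; linarith [h]
  set C : ℝ := g + 1 with hCdef
  have hC : 0 < C := by rw [hCdef]; linarith
  set v : ℕ → ℝ := fun i =>
    if i = 0 then 1 else if i = 1 then 1 - ε else if i = 2 then g + ε else ε / (i : ℝ)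
    with hvdef
  have hv0 : v 0 = 1 := by simp [hvdef]
  have hv1 : v 1 = 1 - ε := by simp [hvdef]
  have hv2 : v 2 = g + ε := by simp [hvdef]
  have hA : ∀ i : ℕ, i ≠ 0 → i ≠ 1 → i ≠ 2 → v i = ε / (i : ℝ) := by
    intro i h0 h1 h2
    simp [hvdef, h0, h1, h2]
  have hA3 : ∀ i : ℕ, i ≠ 0 → i ≠ 1 → i ≠ 2 → (3 : ℝ) ≤ (i : ℝ) := by
    intro i h0 h1 h2
    exact_mod_cast (by omega : (3:ℕ) ≤ i)
  have hAsmall : ∀ i : ℕ, i ≠ 0 → i ≠ 1 → i ≠ 2 → 0 < v i ∧ v i ≤ 1/30 := by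
    intro i h0 h1 h2
    have h3 := hA3 i h0 h1 h2
    rw [hA i h0 h1 h2]
    constructor
    · apply div_pos hε0; linarith
    · calc ε / (i : ℝ) ≤ (1/10) / 3 := by gcongr
        _ ≤ 1/30 := by norm_num
  have hvpos : ∀ i, 0 < v i := by
    intro i
    by_cases h0 : i = 0
    · subst h0; rw [hv0]; norm_num
    by_cases h1 : i = 1
    · subst h1; rw [hv1]; linarith
    by_cases h2 : i = 2
    · subst h2; rw [hv2]; linarith
    exact (hAsmall i h0 h1 h2).1
  have hvle : ∀ i, v i ≤ C := by
    intro i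
    by_cases h0 : i = 0
    · subst h0; rw [hv0, hCdef]; linarith
    by_cases h1 : i = 1
    · subst h1; rw [hv1, hCdef]; linarith
    by_cases h2 : i = 2
    · subst h2; rw [hv2, hCdef]; linarith
    have := (hAsmall i h0 h1 h2).2
    rw [hCdef]; linarith
  have hvanti : StrictAnti v := by
    apply strictAnti_nat_of_succ_lt
    intro n
    by_cases h0 : n = 0
    · subst h0; rw [hv0, hv1]; linarith
    by_cases h1 : n = 1
    · subst h1; rw [hv1, hv2]; linarith
    by_cases h2 : n = 2
    · subst h2
      rw [hv2, hA 3 (by omega) (by omega) (by omega)]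
      have : ε / ((3:ℕ) : ℝ) ≤ 1/30 := (by
        have := (hAsmall 3 (by omega) (by omega) (by omega)).2
        rwa [hA 3 (by omega) (by omega) (by omega)] at this)
      have hpos : 0 < ε / ((3:ℕ):ℝ) := by
        apply div_pos hε0; norm_num
      linarith
    · have h3 := hA3 n h0 h1 h2
      rw [hA n h0 h1 h2, hA (n+1) (by omega) (by omega) (by omega)]
      have hcast : ((n + 1 : ℕ) : ℝ) = (n : ℝ) + 1 := by push_cast; ring
      rw [hcast]
      apply div_lt_div_of_pos_left hε0 (by linarith) (by linarith)
  have hinj : Function.Injective v := hvanti.injective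
  -- the two-item instance {0, 2}
  obtain ⟨hM2sub, hM2cap⟩ := hfeas v ownerF C hC hvpos hvle hinj {0, 2}
  have happ2 := happrox v ownerF C hC hvpos hvle hinj ({0, 2} : Finset ℕ)
  have hopt2 : 1 ≤ optValUD v C {0, 2} := by
    have h := optValUD_lower (v := v) (C := C) (D := ({0} : Finset ℕ))
      (E := ({0, 2} : Finset ℕ)) (by intro i hi; simp at hi; simp [hi])
      (by rw [Finset.sum_singleton, hv0, hCdef]; linarith)
    rwa [Finset.sum_singleton, hv0] at h
  have hM2lb : α ≤ ∑ i ∈ M v ownerF C {0, 2}, v i := by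
    have : α * 1 ≤ α * optValUD v C {0, 2} := by
      apply mul_le_mul_of_nonneg_left hopt2 (by linarith)
    linarith
  have h0M2 : 0 ∈ M v ownerF C {0, 2} := by
    by_contra h0
    have hsub1 : M v ownerF C {0, 2} ⊆ {2} := by
      intro i hi
      have h := hM2sub hi
      simp only [Finset.mem_insert, Finset.mem_singleton] at h ⊢
      rcases h with h | h
      · exact absurd (h ▸ hi) h0
      · exact h
    have hle2 : ∑ i ∈ M v ownerF C {0, 2}, v i ≤ ∑ i ∈ ({2} : Finset ℕ), v i :=
      Finset.sum_le_sum_of_subset_of_nonneg hsub1 (fun i _ _ => (hvpos i).le)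
    rw [Finset.sum_singleton, hv2] at hle2
    linarith
  have hfil2 : 1 ≤ ∑ i ∈ (M v ownerF C {0, 2}).filter (fun i => ownerF i = 1), v i := by
    have hmem : 0 ∈ (M v ownerF C {0, 2}).filter (fun i => ownerF i = 1) :=
      Finset.mem_filter.2 ⟨h0M2, rfl⟩
    have h := Finset.single_le_sum (f := v) (fun i _ => (hvpos i).le) hmem
    rwa [hv0] at h
  -- the three-item instance {0, 1, 2}
  obtain ⟨hM3sub, hM3cap⟩ := hfeas v ownerF C hC hvpos hvle hinj {0, 1, 2}
  have happ3 := happrox v ownerF C hC hvpos hvle hinj ({0, 1, 2} : Finset ℕ)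
  have hSP3 := hSP v ownerF C hC hvpos hvle hinj {0, 1, 2} 1 {0, 2}
    (by intro i hi; fin_cases hi <;> simp)
    (by intro i hi; simp only [Finset.mem_sdiff, Finset.mem_insert, Finset.mem_singleton,
          Finset.mem_filter] at hi ⊢
        obtain ⟨h | h | h, hn⟩ := hi <;> simp [h, ownerF] at hn ⊢)
  have hfil3 : 1 ≤ ∑ i ∈ (M v ownerF C {0, 1, 2}).filter (fun i => ownerF i = 1), v i :=
    le_trans hfil2 hSP3
  have h0M3 : 0 ∈ M v ownerF C {0, 1, 2} := by
    by_contra h0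
    have hsubF : (M v ownerF C {0, 1, 2}).filter (fun i => ownerF i = 1) ⊆ {1} := by
      intro i hi
      rw [Finset.mem_filter] at hi
      have h := hM3sub hi.1
      simp only [Finset.mem_insert, Finset.mem_singleton] at h ⊢
      rcases h with h | h | h
      · exact absurd (h ▸ hi.1) h0
      · exact h
      · exact absurd hi.2 (by rw [h]; simp [ownerF])
    have hle1 : ∑ i ∈ (M v ownerF C {0, 1, 2}).filter (fun i => ownerF i = 1), v i ≤
        ∑ i ∈ ({1} : Finset ℕ), v i :=
      Finset.sum_le_sum_of_subset_of_nonneg hsubF (fun i _ _ => (hvpos i).le)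
    rw [Finset.sum_singleton, hv1] at hle1
    linarith
  have h1M3 : 1 ∉ M v ownerF C {0, 1, 2} := by
    intro h1
    have hsub01 : ({0, 1} : Finset ℕ) ⊆ M v ownerF C {0, 1, 2} := by
      intro i hi
      simp only [Finset.mem_insert, Finset.mem_singleton] at hi
      rcases hi with h | h
      · exact h ▸ h0M3
      · exact h ▸ h1
    have hge : ∑ i ∈ ({0, 1} : Finset ℕ), v i ≤ ∑ i ∈ M v ownerF C {0, 1, 2}, v i :=
      Finset.sum_le_sum_of_subset_of_nonneg hsub01 (fun i _ _ => (hvpos i).le)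
    rw [Finset.sum_pair (by norm_num), hv0, hv1] at hge
    rw [hCdef] at hM3cap
    linarith
  have h2M3 : 2 ∉ M v ownerF C {0, 1, 2} := by
    intro h2
    have hsub02 : ({0, 2} : Finset ℕ) ⊆ M v ownerF C {0, 1, 2} := by
      intro i hi
      simp only [Finset.mem_insert, Finset.mem_singleton] at hi
      rcases hi with h | h
      · exact h ▸ h0M3
      · exact h ▸ h2
    have hge : ∑ i ∈ ({0, 2} : Finset ℕ), v i ≤ ∑ i ∈ M v ownerF C {0, 1, 2}, v i :=
      Finset.sum_le_sum_of_subset_of_nonneg hsub02 (fun i _ _ => (hvpos i).le)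
    rw [Finset.sum_pair (by norm_num), hv0, hv2] at hge
    rw [hCdef] at hM3cap
    linarith
  have hM3sub0 : M v ownerF C {0, 1, 2} ⊆ {0} := by
    intro i hi
    have h := hM3sub hi
    simp only [Finset.mem_insert, Finset.mem_singleton] at h ⊢
    rcases h with h | h | h
    · exact h
    · exact absurd (h ▸ hi) h1M3
    · exact absurd (h ▸ hi) h2M3
  have hsum3 : ∑ i ∈ M v ownerF C {0, 1, 2}, v i ≤ 1 := by
    have h := Finset.sum_le_sum_of_subset_of_nonneg hM3sub0 (fun i _ _ => (hvpos i).le)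
    rwa [Finset.sum_singleton, hv0] at h
  have hopt3 : g + 1 ≤ optValUD v C {0, 1, 2} := by
    have h := optValUD_lower (v := v) (C := C) (D := ({1, 2} : Finset ℕ))
      (E := ({0, 1, 2} : Finset ℕ)) (by intro i hi; simp at hi; rcases hi with h | h <;> simp [h])
      (by rw [Finset.sum_pair (by norm_num), hv1, hv2, hCdef]; linarith)
    rwa [Finset.sum_pair (by norm_num), hv1, hv2, show 1 - ε + (g + ε) = g + 1 by ring] at h
  have hfinal : α * (g + 1) ≤ 1 := by
    have h := mul_le_mul_of_nonneg_left hopt3 (show (0:ℝ) ≤ α by linarith)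
    linarith
  nlinarith [hα, hgg, hg1]
end

section
/- Let M be a randomized mechanism defined on all unit-density instances of the strategic knapsack problem (including instances with two agents), i.e., M assigns to each set of items E' a probability distribution over feasible subsets of E'. Suppose M is strategyproof in expectation (E[v_a(M(E))] ≥ E[v_a(M(E'))] for every unit-density instance with items E, agent a, and E' ⊆ E with E∖E' ⊆ E_a) and α-approximate in expectation (E[v(M(E))] ≥ α·v(Opt(E)) for every unit-density instance). Then α ≤ 1/(5φ−7), where φ = (1+√5)/2 is the golden ratio. -/
open Finset

private lemma sum_mul_le_sum_mul {E : Finset ℕ} {p f g : Finset ℕ → ℝ}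
    (hnn : ∀ D, 0 ≤ p D)
    (h : ∀ D ∈ E.powerset, p D ≠ 0 → f D ≤ g D) :
    ∑ D ∈ E.powerset, p D * f D ≤ ∑ D ∈ E.powerset, p D * g D := by
  apply Finset.sum_le_sum
  intro D hD
  by_cases hp : p D = 0
  · simp [hp]
  · exact mul_le_mul_of_nonneg_left (h D hD hp) (hnn D)

set_option maxHeartbeats 1000000 in
/-- any randomized mechanism defined on all unit-density instances
(items indexed by `ℕ`, agents indexed by `ℕ`, so in particular instances with two agents),
given as the probability `p v owner C E D` of returning the subset `D` on input `E`,
that is strategyproof in expectation and `α`-approximate in expectation satisfies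
`α ≤ 1/(5φ−7)`, where `φ = (1+√5)/2` is the golden ratio. -/
theorem stmt_19 (α : ℝ)
    (p : (ℕ → ℝ) → (ℕ → ℕ) → ℝ → Finset ℕ → Finset ℕ → ℝ)
    (hprob : ∀ (v : ℕ → ℝ) (owner : ℕ → ℕ) (C : ℝ),
      0 < C → (∀ i, 0 < v i) → (∀ i, v i ≤ C) → Function.Injective v →
      ∀ E : Finset ℕ,
        (∀ D : Finset ℕ, 0 ≤ p v owner C E D) ∧
        (∑ D ∈ E.powerset, p v owner C E D = 1) ∧
        (∀ D : Finset ℕ, p v owner C E D ≠ 0 → D ⊆ E ∧ ∑ i ∈ D, v i ≤ C))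
    (hSP : ∀ (v : ℕ → ℝ) (owner : ℕ → ℕ) (C : ℝ),
      0 < C → (∀ i, 0 < v i) → (∀ i, v i ≤ C) → Function.Injective v →
      ∀ E : Finset ℕ, ∀ a : ℕ, ∀ E' ⊆ E, E \ E' ⊆ E.filter (fun i => owner i = a) →
        ∑ D ∈ E'.powerset,
            p v owner C E' D * ∑ i ∈ D.filter (fun i => owner i = a), v i ≤
          ∑ D ∈ E.powerset,
            p v owner C E D * ∑ i ∈ D.filter (fun i => owner i = a), v i)
    (happrox : ∀ (v : ℕ → ℝ) (owner : ℕ → ℕ) (C : ℝ),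
      0 < C → (∀ i, 0 < v i) → (∀ i, v i ≤ C) → Function.Injective v →
      ∀ E : Finset ℕ,
        α * optValUD v C E ≤ ∑ D ∈ E.powerset, p v owner C E D * ∑ i ∈ D, v i) :
    α ≤ 1 / (5 * ((1 + Real.sqrt 5) / 2) - 7) := by
  have hs5 : Real.sqrt 5 ^ 2 = 5 := Real.sq_sqrt (by norm_num)
  have hsnn : (0:ℝ) ≤ Real.sqrt 5 := Real.sqrt_nonneg 5
  have hslb : (2.2:ℝ) < Real.sqrt 5 := by nlinarith
  have hsub : Real.sqrt 5 < 2.4 := by nlinarith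
  set φ : ℝ := (1 + Real.sqrt 5) / 2 with hφdef
  have hφ1 : (1.6:ℝ) < φ := by rw [hφdef]; linarith
  have hφ2 : φ < 1.7 := by rw [hφdef]; linarith
  have hφsq : φ ^ 2 = φ + 1 := by rw [hφdef]; linear_combination hs5 / 4
  have h57 : (0:ℝ) < 5 * φ - 7 := by linarith
  clear_value φ
  clear hφdef hs5 hsnn hslb hsub
  rcases le_or_gt α 0 with hα | hα
  · have : (0:ℝ) < 1 / (5 * φ - 7) := by positivity
    linarith
  have hα0 : (0:ℝ) ≤ α := le_of_lt hα
  have key : ∀ ε : ℝ, 0 < ε → ε ≤ 1/10 → α * (5 - 2*φ) ≤ φ + 3*ε := by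
    intro ε hε hε10
    set v : ℕ → ℝ := fun n => if n = 0 then 1 - ε else if n = 2 then φ else (n:ℝ)⁻¹
      with hvdef
    set owner : ℕ → ℕ := fun n => if n = 1 then 1 else 0 with hodef
    have hv0 : v 0 = 1 - ε := by simp [hvdef]
    have hv1 : v 1 = 1 := by simp [hvdef]
    have hv2 : v 2 = φ := by simp [hvdef]
    have hvtail : ∀ n : ℕ, n ≠ 0 → n ≠ 2 → v n = (n:ℝ)⁻¹ := by
      intro n h1 h2; simp [hvdef, h1, h2]
    have hvpos : ∀ i, 0 < v i := by
      intro i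
      rw [hvdef]
      dsimp only
      split_ifs with h1 h2
      · linarith
      · linarith
      · have h1' : 1 ≤ i := Nat.one_le_iff_ne_zero.mpr h1
        have : (1:ℝ) ≤ (i:ℝ) := by exact_mod_cast h1'
        have : (0:ℝ) < (i:ℝ) := by linarith
        positivity
    have hvle : ∀ i, v i ≤ 2 := by
      intro i
      rw [hvdef]
      dsimp only
      split_ifs with h1 h2
      · linarith
      · linarith
      · have h1' : 1 ≤ i := Nat.one_le_iff_ne_zero.mpr h1
        have hi1 : (1:ℝ) ≤ (i:ℝ) := by exact_mod_cast h1'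
        have hi0 : (0:ℝ) < (i:ℝ) := by linarith
        have hmul : (i:ℝ) * (i:ℝ)⁻¹ = 1 := mul_inv_cancel₀ (ne_of_gt hi0)
        have hipos : (0:ℝ) < (i:ℝ)⁻¹ := by positivity
        nlinarith
    have hvinj : Function.Injective v := by
      have tail_le_one : ∀ n : ℕ, n ≠ 0 → (0:ℝ) < (n:ℝ)⁻¹ ∧ (n:ℝ)⁻¹ ≤ 1 := by
        intro n h1
        have h1' : 1 ≤ n := Nat.one_le_iff_ne_zero.mpr h1
        have hi1 : (1:ℝ) ≤ (n:ℝ) := by exact_mod_cast h1'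
        have hi0 : (0:ℝ) < (n:ℝ) := by linarith
        have hmul : (n:ℝ) * (n:ℝ)⁻¹ = 1 := mul_inv_cancel₀ (ne_of_gt hi0)
        have hipos : (0:ℝ) < (n:ℝ)⁻¹ := by positivity
        constructor
        · exact hipos
        · nlinarith
      have tail_small : ∀ n : ℕ, n ≠ 0 → n ≠ 1 → n ≠ 2 → (n:ℝ)⁻¹ ≤ 1/3 := by
        intro n h0 h1 h2
        have h3 : 3 ≤ n := by omega
        have hi3 : (3:ℝ) ≤ (n:ℝ) := by exact_mod_cast h3
        have hi0 : (0:ℝ) < (n:ℝ) := by linarith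
        have hmul : (n:ℝ) * (n:ℝ)⁻¹ = 1 := mul_inv_cancel₀ (ne_of_gt hi0)
        have hipos : (0:ℝ) < (n:ℝ)⁻¹ := (tail_le_one n h0).1
        nlinarith
      intro a b hab
      by_cases ha0 : a = 0 <;> by_cases hb0 : b = 0
      · rw [ha0, hb0]
      · exfalso
        rw [ha0, hv0] at hab
        by_cases hb2 : b = 2
        · rw [hb2, hv2] at hab; linarith
        · rw [hvtail b hb0 hb2] at hab
          by_cases hb1 : b = 1
          · rw [hb1] at hab; norm_num at hab; linarith
          · have := tail_small b hb0 hb1 hb2; linarith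
      · exfalso
        rw [hb0, hv0] at hab
        by_cases ha2 : a = 2
        · rw [ha2, hv2] at hab; linarith
        · rw [hvtail a ha0 ha2] at hab
          by_cases ha1 : a = 1
          · rw [ha1] at hab; norm_num at hab; linarith
          · have := tail_small a ha0 ha1 ha2; linarith
      · by_cases ha2 : a = 2 <;> by_cases hb2 : b = 2
        · rw [ha2, hb2]
        · exfalso
          rw [ha2, hv2, hvtail b hb0 hb2] at hab
          have := tail_le_one b hb0
          linarith [this.2]
        · exfalso
          rw [hb2, hv2, hvtail a ha0 ha2] at hab
          have := tail_le_one a ha0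
          linarith [this.2]
        · rw [hvtail a ha0 ha2, hvtail b hb0 hb2] at hab
          have : (a:ℝ) = (b:ℝ) := inv_inj.mp hab
          exact_mod_cast this
    have hC : (0:ℝ) < 2 := by norm_num
    have hP := hprob v owner 2 hC hvpos hvle hvinj
    obtain ⟨hnn0, hs0, hf0⟩ := hP {1}
    obtain ⟨hnn1, hs1, hf1⟩ := hP {1,2}
    obtain ⟨hnn2, hs2, hf2⟩ := hP {0,1,2}
    have hbdd : ∀ E : Finset ℕ, BddAbove ((fun D : Finset ℕ => ∑ i ∈ D, v i) ''
        {D : Finset ℕ | D ⊆ E ∧ ∑ i ∈ D, v i ≤ 2}) := by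
      intro E
      apply Set.Finite.bddAbove
      apply Set.Finite.image
      apply Set.Finite.subset E.powerset.finite_toSet
      intro D hD
      simpa [Finset.mem_powerset] using hD.1
    -- sums over concrete sets
    have hsum01 : ∑ i ∈ ({0,1} : Finset ℕ), v i = 2 - ε := by
      rw [Finset.sum_pair (by norm_num : (0:ℕ) ≠ 1), hv0, hv1]; ring
    have hsum12 : ∑ i ∈ ({1,2} : Finset ℕ), v i = 1 + φ := by
      rw [Finset.sum_pair (by norm_num : (1:ℕ) ≠ 2), hv1, hv2]
    have hsum02 : ∑ i ∈ ({0,2} : Finset ℕ), v i = 1 - ε + φ := by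
      rw [Finset.sum_pair (by norm_num : (0:ℕ) ≠ 2), hv0, hv2]
    have hsum012 : ∑ i ∈ ({0,1,2} : Finset ℕ), v i = 2 - ε + φ := by
      rw [show ({0,1,2} : Finset ℕ) = insert 0 {1,2} from rfl,
        Finset.sum_insert (by decide), hsum12, hv0]; ring
    -- filters
    have hfil0 : Finset.filter (fun i => owner i = 0) ({0} : Finset ℕ) = {0} := by
      simp only [hodef]; decide
    have hfil1 : Finset.filter (fun i => owner i = 0) ({1} : Finset ℕ) = ∅ := by
      simp only [hodef]; decide
    have hfil2 : Finset.filter (fun i => owner i = 0) ({2} : Finset ℕ) = {2} := by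
      simp only [hodef]; decide
    have hfil01 : Finset.filter (fun i => owner i = 0) ({0,1} : Finset ℕ) = {0} := by
      simp only [hodef]; decide
    have hfilem : Finset.filter (fun i => owner i = 0) (∅ : Finset ℕ) = ∅ := by
      simp only [hodef]; decide
    -- step 1 : α ≤ 1 via the instance {1}
    have hopt0 : (1:ℝ) ≤ optValUD v 2 {1} := by
      unfold optValUD
      apply le_csSup (hbdd _)
      refine ⟨{1}, ⟨Finset.Subset.refl _, ?_⟩, ?_⟩
      · show ∑ i ∈ ({1} : Finset ℕ), v i ≤ 2
        rw [Finset.sum_singleton, hv1]; norm_num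
      · show ∑ i ∈ ({1} : Finset ℕ), v i = 1
        rw [Finset.sum_singleton, hv1]
    have hT0 : ∑ D ∈ ({1} : Finset ℕ).powerset, p v owner 2 {1} D * ∑ i ∈ D, v i ≤ 1 := by
      calc ∑ D ∈ ({1} : Finset ℕ).powerset, p v owner 2 {1} D * ∑ i ∈ D, v i
          ≤ ∑ D ∈ ({1} : Finset ℕ).powerset, p v owner 2 {1} D * 1 := by
            apply sum_mul_le_sum_mul hnn0
            intro D hD _
            rw [Finset.mem_powerset, Finset.subset_singleton_iff] at hD
            rcases hD with rfl | rfl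
            · simp
            · rw [Finset.sum_singleton, hv1]
        _ = 1 := by rw [← Finset.sum_mul, hs0, one_mul]
    have hα1 : α ≤ 1 := by
      have h1 := happrox v owner 2 hC hvpos hvle hvinj {1}
      have h2 : α * 1 ≤ α * optValUD v 2 {1} := mul_le_mul_of_nonneg_left hopt0 hα0
      linarith
    -- step 2 : the instance {1,2}
    have hopt1 : φ ≤ optValUD v 2 {1,2} := by
      unfold optValUD
      apply le_csSup (hbdd _)
      refine ⟨{2}, ⟨?_, ?_⟩, ?_⟩
      · decide
      · show ∑ i ∈ ({2} : Finset ℕ), v i ≤ 2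
        rw [Finset.sum_singleton, hv2]; linarith
      · show ∑ i ∈ ({2} : Finset ℕ), v i = φ
        rw [Finset.sum_singleton, hv2]
    have hαφ : α * φ ≤
        ∑ D ∈ ({1,2} : Finset ℕ).powerset, p v owner 2 {1,2} D * ∑ i ∈ D, v i := by
      have h1 := happrox v owner 2 hC hvpos hvle hvinj {1,2}
      have h2 : α * φ ≤ α * optValUD v 2 {1,2} := mul_le_mul_of_nonneg_left hopt1 hα0
      linarith
    have hpw1 : ({1,2} : Finset ℕ).powerset = {∅, {1}, {2}, {1,2}} := by decide
    have hI : φ * (∑ D ∈ ({1,2} : Finset ℕ).powerset, p v owner 2 {1,2} D * ∑ i ∈ D, v i)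
        ≤ φ + (φ - 1) * ∑ D ∈ ({1,2} : Finset ℕ).powerset,
            p v owner 2 {1,2} D * ∑ i ∈ D.filter (fun i => owner i = 0), v i := by
      have hstep : ∀ D ∈ ({1,2} : Finset ℕ).powerset, p v owner 2 {1,2} D ≠ 0 →
          φ * ∑ i ∈ D, v i ≤ φ + (φ - 1) * ∑ i ∈ D.filter (fun i => owner i = 0), v i := by
        intro D hD hp
        have hfe := (hf1 D hp).2
        rw [hpw1] at hD
        simp only [Finset.mem_insert, Finset.mem_singleton] at hD
        rcases hD with rfl | rfl | rfl | rfl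
        all_goals first
          | (exfalso
             first
               | rw [hsum12] at hfe
               | rw [hsum02] at hfe
               | rw [hsum012] at hfe
             linarith)
          | (simp only [hfil0, hfil1, hfil2, hfil01, hfilem, Finset.sum_singleton,
               Finset.sum_empty, hv0, hv1, hv2, hsum01]
             nlinarith [hφsq, hε.le, hε10, hφ1, hφ2])
          | nlinarith [hφsq, hε.le, hε10, hφ1, hφ2]
      calc φ * (∑ D ∈ ({1,2} : Finset ℕ).powerset, p v owner 2 {1,2} D * ∑ i ∈ D, v i)
          = ∑ D ∈ ({1,2} : Finset ℕ).powerset, p v owner 2 {1,2} D * (φ * ∑ i ∈ D, v i) := by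
            rw [Finset.mul_sum]; exact Finset.sum_congr rfl (fun D _ => by ring)
        _ ≤ ∑ D ∈ ({1,2} : Finset ℕ).powerset, p v owner 2 {1,2} D *
              (φ + (φ - 1) * ∑ i ∈ D.filter (fun i => owner i = 0), v i) :=
            sum_mul_le_sum_mul hnn1 hstep
        _ = φ * (∑ D ∈ ({1,2} : Finset ℕ).powerset, p v owner 2 {1,2} D)
            + (φ - 1) * ∑ D ∈ ({1,2} : Finset ℕ).powerset,
                p v owner 2 {1,2} D * ∑ i ∈ D.filter (fun i => owner i = 0), v i := by
            rw [Finset.mul_sum, Finset.mul_sum, ← Finset.sum_add_distrib]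
            exact Finset.sum_congr rfl (fun D _ => by ring)
        _ = φ + (φ - 1) * ∑ D ∈ ({1,2} : Finset ℕ).powerset,
                p v owner 2 {1,2} D * ∑ i ∈ D.filter (fun i => owner i = 0), v i := by
            rw [hs1, mul_one]
    -- strategyproofness between {1,2} and {0,1,2}
    have hSP1 : ∑ D ∈ ({1,2} : Finset ℕ).powerset,
          p v owner 2 {1,2} D * ∑ i ∈ D.filter (fun i => owner i = 0), v i
        ≤ ∑ D ∈ ({0,1,2} : Finset ℕ).powerset,
          p v owner 2 {0,1,2} D * ∑ i ∈ D.filter (fun i => owner i = 0), v i := by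
      apply hSP v owner 2 hC hvpos hvle hvinj {0,1,2} 0 {1,2} (by decide)
      simp only [hodef]; decide
    -- step 3 : the instance {0,1,2}
    have hopt2 : 2 - ε ≤ optValUD v 2 {0,1,2} := by
      unfold optValUD
      apply le_csSup (hbdd _)
      refine ⟨{0,1}, ⟨?_, ?_⟩, ?_⟩
      · decide
      · show ∑ i ∈ ({0,1} : Finset ℕ), v i ≤ 2
        rw [hsum01]; linarith
      · show ∑ i ∈ ({0,1} : Finset ℕ), v i = 2 - ε
        rw [hsum01]
    have hαT2 : α * (2 - ε) ≤
        ∑ D ∈ ({0,1,2} : Finset ℕ).powerset, p v owner 2 {0,1,2} D * ∑ i ∈ D, v i := by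
      have h1 := happrox v owner 2 hC hvpos hvle hvinj {0,1,2}
      have h2 : α * (2 - ε) ≤ α * optValUD v 2 {0,1,2} :=
        mul_le_mul_of_nonneg_left hopt2 hα0
      linarith
    have hpw2 : ({0,1,2} : Finset ℕ).powerset
        = {∅, {0}, {1}, {2}, {0,1}, {0,2}, {1,2}, {0,1,2}} := by decide
    have hII : (φ - 1 + ε) * (∑ D ∈ ({0,1,2} : Finset ℕ).powerset,
            p v owner 2 {0,1,2} D * ∑ i ∈ D, v i)
        + (2 - ε - φ) * (∑ D ∈ ({0,1,2} : Finset ℕ).powerset,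
            p v owner 2 {0,1,2} D * ∑ i ∈ D.filter (fun i => owner i = 0), v i)
        ≤ φ := by
      have hstep : ∀ D ∈ ({0,1,2} : Finset ℕ).powerset, p v owner 2 {0,1,2} D ≠ 0 →
          (φ - 1 + ε) * ∑ i ∈ D, v i
            + (2 - ε - φ) * ∑ i ∈ D.filter (fun i => owner i = 0), v i ≤ φ := by
        intro D hD hp
        have hfe := (hf2 D hp).2
        rw [hpw2] at hD
        simp only [Finset.mem_insert, Finset.mem_singleton] at hD
        rcases hD with rfl | rfl | rfl | rfl | rfl | rfl | rfl | rfl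
        all_goals first
          | (exfalso
             first
               | rw [hsum12] at hfe
               | rw [hsum02] at hfe
               | rw [hsum012] at hfe
             linarith)
          | (simp only [hfil0, hfil1, hfil2, hfil01, hfilem, Finset.sum_singleton,
               Finset.sum_empty, hv0, hv1, hv2, hsum01]
             nlinarith [hφsq, hε.le, hε10, hφ1, hφ2])
          | nlinarith [hφsq, hε.le, hε10, hφ1, hφ2]
      calc (φ - 1 + ε) * (∑ D ∈ ({0,1,2} : Finset ℕ).powerset,
              p v owner 2 {0,1,2} D * ∑ i ∈ D, v i)
          + (2 - ε - φ) * (∑ D ∈ ({0,1,2} : Finset ℕ).powerset,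
              p v owner 2 {0,1,2} D * ∑ i ∈ D.filter (fun i => owner i = 0), v i)
          = ∑ D ∈ ({0,1,2} : Finset ℕ).powerset, p v owner 2 {0,1,2} D *
              ((φ - 1 + ε) * ∑ i ∈ D, v i
                + (2 - ε - φ) * ∑ i ∈ D.filter (fun i => owner i = 0), v i) := by
            rw [Finset.mul_sum, Finset.mul_sum, ← Finset.sum_add_distrib]
            exact Finset.sum_congr rfl (fun D _ => by ring)
        _ ≤ ∑ D ∈ ({0,1,2} : Finset ℕ).powerset, p v owner 2 {0,1,2} D * φ :=
            sum_mul_le_sum_mul hnn2 hstep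
        _ = φ := by rw [← Finset.sum_mul, hs2, one_mul]
    -- assemble
    set T1 : ℝ := ∑ D ∈ ({1,2} : Finset ℕ).powerset,
        p v owner 2 {1,2} D * ∑ i ∈ D, v i with hT1
    set U1 : ℝ := ∑ D ∈ ({1,2} : Finset ℕ).powerset,
        p v owner 2 {1,2} D * ∑ i ∈ D.filter (fun i => owner i = 0), v i with hU1
    set T2 : ℝ := ∑ D ∈ ({0,1,2} : Finset ℕ).powerset,
        p v owner 2 {0,1,2} D * ∑ i ∈ D, v i with hT2
    set U2 : ℝ := ∑ D ∈ ({0,1,2} : Finset ℕ).powerset,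
        p v owner 2 {0,1,2} D * ∑ i ∈ D.filter (fun i => owner i = 0), v i with hU2
    clear_value T1 U1 T2 U2
    clear hT1 hU1 hT2 hU2 hP hbdd hf0 hf1 hf2 hnn0 hnn1 hnn2 hT0 hs0 hs1 hs2
    clear hopt0 hopt1 hopt2 hsum01 hsum12 hsum02 hsum012
    clear hfil0 hfil1 hfil2 hfil01 hfilem hpw1 hpw2
    clear hvpos hvle hvinj hvtail hv0 hv1 hv2
    clear hvdef hodef v owner
    have h1' : α * φ^2 ≤ φ + (φ - 1) * U2 := by
      have ha : φ * (α * φ) ≤ φ * T1 :=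
        mul_le_mul_of_nonneg_left hαφ (by linarith)
      have hb : (φ - 1) * U1 ≤ (φ - 1) * U2 :=
        mul_le_mul_of_nonneg_left hSP1 (by linarith)
      nlinarith [hI]
    have h2' : (φ - 1 + ε) * (α * (2 - ε)) + (2 - ε - φ) * U2 ≤ φ := by
      have ha : (φ - 1 + ε) * (α * (2 - ε)) ≤ (φ - 1 + ε) * T2 :=
        mul_le_mul_of_nonneg_left hαT2 (by linarith)
      linarith [hII]
    have h3 := mul_le_mul_of_nonneg_left h1' (show (0:ℝ) ≤ 2 - ε - φ by linarith)
    have h4 := mul_le_mul_of_nonneg_left h2' (show (0:ℝ) ≤ φ - 1 by linarith)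
    have h5 : (2 - ε - φ) * (α * φ^2) + (φ - 1) * ((φ - 1 + ε) * (α * (2 - ε)))
        ≤ φ * (1 - ε) := by nlinarith [h3, h4]
    have hK : 5 - 2*φ - 3*ε ≤ (2 - ε - φ) * φ^2 + (φ - 1) * ((φ - 1 + ε) * (2 - ε)) := by
      have hq : φ^2 - φ - 1 = 0 := by linarith [hφsq]
      have hid2 : (2 - ε - φ) * φ^2 + (φ - 1) * ((φ - 1 + ε) * (2 - ε))
          = (5 - 2*φ) - 3*ε + ε*((φ-1)*(2-ε)) + (3 - 2*ε - φ)*(φ^2 - φ - 1) := by ring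
      have h0 : (3 - 2*ε - φ)*(φ^2 - φ - 1) = 0 := by rw [hq, mul_zero]
      have hpos : 0 ≤ ε*((φ-1)*(2-ε)) :=
        mul_nonneg hε.le (mul_nonneg (by linarith) (by linarith))
      linarith [hid2, h0, hpos]
    have hαK : α * (5 - 2*φ - 3*ε) ≤
        α * ((2 - ε - φ) * φ^2 + (φ - 1) * ((φ - 1 + ε) * (2 - ε))) :=
      mul_le_mul_of_nonneg_left hK hα0
    have hL : α * ((2 - ε - φ) * φ^2 + (φ - 1) * ((φ - 1 + ε) * (2 - ε)))
        = (2 - ε - φ) * (α * φ^2) + (φ - 1) * ((φ - 1 + ε) * (α * (2 - ε))) := by ring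
    have hαε : α * ε ≤ ε := mul_le_of_le_one_left hε.le hα1
    nlinarith [hαK, hL, h5, hαε, hε.le, hφ1]
  -- conclude : α * (5 - 2φ) ≤ φ
  have hmain : α * (5 - 2*φ) ≤ φ := by
    by_contra hcon
    push_neg at hcon
    set δ := α * (5 - 2*φ) - φ with hδ
    have hδ0 : 0 < δ := by linarith
    have hmin0 : 0 < min (δ/6) (1/10 : ℝ) := lt_min (by linarith) (by norm_num)
    have hk := key (min (δ/6) (1/10)) hmin0 (min_le_right _ _)
    have h1 : min (δ/6) (1/10 : ℝ) ≤ δ/6 := min_le_left _ _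
    linarith
  have hid : φ * (5*φ - 7) = 5 - 2*φ := by linear_combination 5 * hφsq
  rw [le_div_iff₀ h57]
  nlinarith [hmain, hid, hφ1]
end
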